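/- arXiv:2005.10042 — 6 statements merged into one kernel-verified Lean document; each statement's English description precedes it below -/
import Mathlib

section
/- For a solution of the truncated silicosis system, for any real weights (g_i) and any integer 1 ≤ m < n, the moment identity Σ_{i=m}^{n} g_i dM_i^n/dt + Σ_{i=m}^{n} g_i(p_i+q_i)M_i^n = g_m x^n k_{m−1} M_{m−1}^n + Σ_{i=m}^{n−1}(g_{i+1}−g_i) x^n k_i M_i^n holds for all t ≥ 0. -/
open MeasureTheory Set Filter

noncomputable section

/-- The truncated silicosis system (system (3.1)) of dimension `n+2`, stated as a
pointwise property at time `t`. -/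
def TruncSol (n : ℕ) (k p q : ℕ → ℝ) (r α : ℝ) (x : ℝ → ℝ) (M : ℕ → ℝ → ℝ) (t : ℝ) : Prop :=
  HasDerivAt (M 0) (r - k 0 * x t * M 0 t - (p 0 + q 0) * M 0 t) t ∧
  (∀ i : ℕ, 1 ≤ i → i ≤ n - 1 →
    HasDerivAt (M i)
      (k (i-1) * x t * M (i-1) t - k i * x t * M i t - (p i + q i) * M i t) t) ∧
  HasDerivAt (M n) (k (n-1) * x t * M (n-1) t - (p n + q n) * M n t) t ∧
  HasDerivAt x
    (α - x t * ∑ i ∈ Finset.range n, k i * M i t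
       + ∑ i ∈ Finset.range (n+1), (i : ℝ) * q i * M i t) t

/-!
Write `Jᵢ = kᵢ x Mᵢ` for the flux from class `i` to class `i+1`. Each `Mᵢ` with `m ≤ i ≤ n` gains
`J_{i-1}` and, unless `i = n`, loses `Jᵢ`, so the weighted sum of the `dMᵢ/dt` contributes
`∑_{i=m}^{n} gᵢ J_{i-1} - ∑_{i=m}^{n-1} gᵢ Jᵢ`; summation by parts turns this into
`g_m J_{m-1} + ∑_{i=m}^{n-1} (g_{i+1} - gᵢ) Jᵢ`.
-/

open Finset

theorem Finset.sum_Icc_eq_add_sum_Ico_succ {A : Type*} [AddCommMonoid A] (f : ℕ → A)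
    {m n : ℕ} (hmn : m ≤ n) :
    ∑ i ∈ Icc m n, f i = f m + ∑ i ∈ Ico m n, f (i + 1) := by
  rw [← Finset.Ico_add_one_right_eq_Icc, sum_eq_sum_Ico_succ_bot (by omega : m < n + 1),
    sum_Ico_add']

theorem Finset.sum_Icc_mul_pred_sub_sum_Ico_mul {R : Type*} [CommRing R] (g J : ℕ → R)
    {m n : ℕ} (hmn : m ≤ n) :
    ∑ i ∈ Icc m n, g i * J (i - 1) - ∑ i ∈ Ico m n, g i * J i
      = g m * J (m - 1) + ∑ i ∈ Ico m n, (g (i + 1) - g i) * J i := by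
  simp only [sum_Icc_eq_add_sum_Ico_succ _ hmn, Nat.add_sub_cancel, sub_mul, sum_sub_distrib,
    add_sub_assoc]

theorem TruncSol.hasDerivAt_weighted_sum {n : ℕ} {k p q : ℕ → ℝ} {r α : ℝ} {x : ℝ → ℝ}
    {M : ℕ → ℝ → ℝ} {t : ℝ} (hsol : TruncSol n k p q r α x M t) (g : ℕ → ℝ) {m : ℕ}
    (hm : 1 ≤ m) (hmn : m ≤ n) :
    HasDerivAt (fun s => ∑ i ∈ Icc m n, g i * M i s)
      (∑ i ∈ Icc m n, g i * (k (i - 1) * x t * M (i - 1) t)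
        - ∑ i ∈ Ico m n, g i * (k i * x t * M i t)
        - ∑ i ∈ Icc m n, g i * (p i + q i) * M i t) t := by
  obtain ⟨-, hmid, hlast, -⟩ := hsol
  have hIco : HasDerivAt (fun s => ∑ i ∈ Ico m n, g i * M i s)
      (∑ i ∈ Ico m n, g i *
        (k (i - 1) * x t * M (i - 1) t - k i * x t * M i t - (p i + q i) * M i t)) t :=
    HasDerivAt.fun_sum fun i hi => by
      rw [Finset.mem_Ico] at hi
      exact (hmid i (hm.trans hi.1) (by omega)).const_mul (g i)
  simp only [← Finset.Ico_add_one_right_eq_Icc, sum_Ico_succ_top hmn]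
  refine (hIco.add (hlast.const_mul (g n))).congr_deriv ?_
  simp only [mul_sub, sum_sub_distrib, mul_assoc]
  abel

theorem trunc_moment_identity_general
    (n : ℕ) (k p q : ℕ → ℝ)
    (r α : ℝ)
    (x : ℝ → ℝ) (M : ℕ → ℝ → ℝ)
    (g : ℕ → ℝ) (m : ℕ) (hm : 1 ≤ m) (hmn : m < n)
    (t : ℝ) (hsol : TruncSol n k p q r α x M t) :
    HasDerivAt (fun s => ∑ i ∈ Finset.Icc m n, g i * M i s)
      (g m * x t * k (m-1) * M (m-1) t
        + (∑ i ∈ Finset.Ico m n, (g (i+1) - g i) * x t * k i * M i t)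
        - ∑ i ∈ Finset.Icc m n, g i * (p i + q i) * M i t) t := by
  refine (hsol.hasDerivAt_weighted_sum g hm hmn.le).congr_deriv ?_
  rw [sum_Icc_mul_pred_sub_sum_Ico_mul g (fun i => k i * x t * M i t) hmn.le]
  congr 2
  · ring
  · exact sum_congr rfl fun i _ => by ring

/-- the moment identity for the truncated system: for any real weights
`(gᵢ)` and `1 ≤ m < n`,
`∑_{i=m}^{n} gᵢ dMᵢⁿ/dt + ∑_{i=m}^{n} gᵢ(pᵢ+qᵢ)Mᵢⁿ
  = g_m xⁿ k_{m−1} M_{m−1}ⁿ + ∑_{i=m}^{n−1}(g_{i+1}−gᵢ) xⁿ kᵢ Mᵢⁿ`,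
expressed by saying that `t ↦ ∑_{i=m}^{n} gᵢ Mᵢⁿ(t)` has derivative equal to the
right-hand side minus `∑_{i=m}^{n} gᵢ(pᵢ+qᵢ)Mᵢⁿ`. -/
theorem trunc_moment_identity
    (n : ℕ) (hn : 2 ≤ n) (k p q : ℕ → ℝ)
    (hk : ∀ i, 0 ≤ k i) (hp : ∀ i, 0 ≤ p i) (hq : ∀ i, 0 ≤ q i)
    (r α : ℝ) (hr : 0 ≤ r) (hα : 0 ≤ α)
    (x : ℝ → ℝ) (M : ℕ → ℝ → ℝ)
    (g : ℕ → ℝ) (m : ℕ) (hm : 1 ≤ m) (hmn : m < n)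
    (t : ℝ) (ht : 0 ≤ t) (hsol : TruncSol n k p q r α x M t) :
    HasDerivAt (fun s => ∑ i ∈ Finset.Icc m n, g i * M i s)
      (g m * x t * k (m-1) * M (m-1) t
        + (∑ i ∈ Finset.Ico m n, (g (i+1) - g i) * x t * k i * M i t)
        - ∑ i ∈ Finset.Icc m n, g i * (p i + q i) * M i t) t :=
  trunc_moment_identity_general n k p q r α x M g m hm hmn t hsol
end
end

section
/- Any global solution of the truncated silicosis system with nonnegative initial data satisfies, for all t ≥ 0, the a priori bound ‖yⁿ(t)‖ ≤ ‖yⁿ(0)‖ + (α+r)t, where ‖yⁿ(t)‖ = x^n(t) + Σ_{i=0}^{n}(i+1)M_i^n(t). In particular, for every i, 0 ≤ M_i^n(t) ≤ (‖yⁿ(0)‖ + (α+r)t)/(i+1). -/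
open MeasureTheory Set Filter

noncomputable section

/-- The norm `‖yⁿ(t)‖ = xⁿ(t) + ∑_{i=0}^{n} (i+1) Mᵢⁿ(t)` (for nonnegative components). -/
def TruncNorm (n : ℕ) (x : ℝ → ℝ) (M : ℕ → ℝ → ℝ) (t : ℝ) : ℝ :=
  x t + ∑ i ∈ Finset.range (n+1), ((i : ℝ) + 1) * M i t

/-!
The weighted mass `xⁿ + ∑ (i+1) Mᵢⁿ` counts free particles plus the particles bound in the
clusters. Along the chain, the transfer `kᵢ x Mᵢ` from `Mᵢ` to `Mᵢ₊₁` costs `kᵢ x Mᵢ` free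
particles but raises the weight by exactly that amount, so these terms cancel and the mass
obeys `N' = α + r - ∑ ((i+1) pᵢ + qᵢ) Mᵢ ≤ α + r`. The mean value inequality then gives the
linear bound, and nonnegativity of every summand bounds each `Mᵢ`.
-/

/-- Chain `0 → 1 → ⋯ → n` with source `r` into compartment `0` and flux `f i` from
compartment `i` to `i + 1`. -/
theorem sum_range_succ_mul_chain_flux (n : ℕ) (r : ℝ) (f : ℕ → ℝ) :
    ∑ i ∈ Finset.range (n + 1),
        ((i : ℝ) + 1) * ((if i = 0 then r else f (i - 1)) - (if i = n then 0 else f i)) =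
      r + ∑ i ∈ Finset.range n, f i := by
  have hin : ∑ i ∈ Finset.range (n + 1), ((i : ℝ) + 1) * (if i = 0 then r else f (i - 1)) =
      r + ∑ i ∈ Finset.range n, ((i : ℝ) + 2) * f i := by
    rw [Finset.sum_range_succ', if_pos rfl, Nat.cast_zero, zero_add, one_mul, add_comm]
    congr 1
    exact Finset.sum_congr rfl fun i _ => by
      rw [if_neg i.succ_ne_zero, Nat.add_sub_cancel]; push_cast; ring
  have hout : ∑ i ∈ Finset.range (n + 1), ((i : ℝ) + 1) * (if i = n then 0 else f i) =
      ∑ i ∈ Finset.range n, ((i : ℝ) + 1) * f i := by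
    rw [Finset.sum_range_succ, if_pos rfl, mul_zero, add_zero]
    exact Finset.sum_congr rfl fun i hi => by rw [if_neg (Finset.mem_range.mp hi).ne]
  simp only [mul_sub, Finset.sum_sub_distrib]
  rw [hin, hout, add_sub_assoc, ← Finset.sum_sub_distrib]
  congr 1
  exact Finset.sum_congr rfl fun i _ => by ring

theorem le_add_mul_of_hasDerivAt_le {f f' : ℝ → ℝ} {C : ℝ}
    (hf : ∀ s, 0 ≤ s → HasDerivAt f (f' s) s) (hC : ∀ s, 0 ≤ s → f' s ≤ C)
    {t : ℝ} (ht : 0 ≤ t) : f t ≤ f 0 + C * t := by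
  have hint : ∀ s ∈ interior (Ici (0 : ℝ)), HasDerivAt f (f' s) s := by
    rw [interior_Ici]
    exact fun s hs => hf s (le_of_lt hs)
  have := (convex_Ici (0 : ℝ)).image_sub_le_mul_sub_of_deriv_le
    (fun s hs => (hf s hs).continuousAt.continuousWithinAt)
    (fun s hs => (hint s hs).differentiableAt.differentiableWithinAt)
    (fun s hs => (hint s hs).deriv ▸ hC s (interior_subset hs)) 0 self_mem_Ici t ht ht
  linarith

namespace TruncSol

variable {n : ℕ} {k p q : ℕ → ℝ} {r α : ℝ} {x : ℝ → ℝ} {M : ℕ → ℝ → ℝ} {t : ℝ}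

theorem hasDerivAt_cluster (h : TruncSol n k p q r α x M t) (hn : n ≠ 0) {i : ℕ} (hi : i ≤ n) :
    HasDerivAt (M i)
      ((if i = 0 then r else k (i - 1) * x t * M (i - 1) t)
        - (if i = n then 0 else k i * x t * M i t) - (p i + q i) * M i t) t := by
  obtain ⟨h0, hmid, hlast, -⟩ := h
  rcases eq_or_ne i 0 with rfl | hi0
  · simpa [Ne.symm hn] using h0
  rcases eq_or_ne i n with rfl | hin
  · simpa [hn] using hlast
  simpa [hi0, hin] using hmid i (Nat.one_le_iff_ne_zero.mpr hi0) (by omega)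

theorem hasDerivAt_truncNorm (h : TruncSol n k p q r α x M t) (hn : n ≠ 0) :
    HasDerivAt (TruncNorm n x M)
      (α + r - ∑ i ∈ Finset.range (n + 1), (((i : ℝ) + 1) * p i + q i) * M i t) t := by
  have hM : HasDerivAt (fun s => ∑ i ∈ Finset.range (n + 1), ((i : ℝ) + 1) * M i s)
      (∑ i ∈ Finset.range (n + 1), ((i : ℝ) + 1) *
        (((if i = 0 then r else k (i - 1) * x t * M (i - 1) t)
          - (if i = n then 0 else k i * x t * M i t)) - (p i + q i) * M i t)) t :=
    HasDerivAt.fun_sum fun i hi =>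
      (h.hasDerivAt_cluster hn (Nat.lt_succ_iff.mp (Finset.mem_range.mp hi))).const_mul _
  have hx := h.2.2.2
  refine (hx.add hM).congr_deriv ?_
  have hloss : ∑ i ∈ Finset.range (n + 1), ((i : ℝ) + 1) * ((p i + q i) * M i t) =
      ∑ i ∈ Finset.range (n + 1), (((i : ℝ) + 1) * p i + q i) * M i t +
        ∑ i ∈ Finset.range (n + 1), (i : ℝ) * q i * M i t := by
    rw [← Finset.sum_add_distrib]
    exact Finset.sum_congr rfl fun i _ => by ring
  have hflux : x t * ∑ i ∈ Finset.range n, k i * M i t =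
      ∑ i ∈ Finset.range n, k i * x t * M i t := by
    rw [Finset.mul_sum]
    exact Finset.sum_congr rfl fun i _ => by ring
  simp only [mul_sub _ (_ - _), Finset.sum_sub_distrib]
  rw [sum_range_succ_mul_chain_flux n r (fun i => k i * x t * M i t)]
  linear_combination -hflux - hloss

end TruncSol

theorem mul_le_truncNorm {n i : ℕ} (hi : i ≤ n) {x : ℝ → ℝ} {M : ℕ → ℝ → ℝ} {t : ℝ}
    (hx : 0 ≤ x t) (hM : ∀ j ≤ n, 0 ≤ M j t) : ((i : ℝ) + 1) * M i t ≤ TruncNorm n x M t := by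
  have hterm : ((i : ℝ) + 1) * M i t ≤ ∑ j ∈ Finset.range (n + 1), ((j : ℝ) + 1) * M j t :=
    Finset.single_le_sum (f := fun j : ℕ => ((j : ℝ) + 1) * M j t)
      (fun j hj => mul_nonneg (by positivity) (hM j (Nat.lt_succ_iff.mp (Finset.mem_range.mp hj))))
      (Finset.mem_range.mpr (Nat.lt_succ_of_le hi))
  unfold TruncNorm
  linarith

theorem trunc_apriori_bound_general
    (n : ℕ) (hn : 2 ≤ n) (k p q : ℕ → ℝ)
    (hp : ∀ i, 0 ≤ p i) (hq : ∀ i, 0 ≤ q i)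
    (r α : ℝ)
    (x : ℝ → ℝ) (M : ℕ → ℝ → ℝ)
    (hsol : ∀ t : ℝ, 0 ≤ t → TruncSol n k p q r α x M t)
    (hxpos : ∀ t : ℝ, 0 ≤ t → 0 ≤ x t)
    (hMpos : ∀ i ≤ n, ∀ t : ℝ, 0 ≤ t → 0 ≤ M i t) :
    ∀ t : ℝ, 0 ≤ t →
      TruncNorm n x M t ≤ TruncNorm n x M 0 + (α + r) * t ∧
      ∀ i ≤ n, 0 ≤ M i t ∧
        M i t ≤ (TruncNorm n x M 0 + (α + r) * t) / ((i : ℝ) + 1) := by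
  intro t ht
  have hnorm : TruncNorm n x M t ≤ TruncNorm n x M 0 + (α + r) * t := by
    refine le_add_mul_of_hasDerivAt_le
      (fun s hs => (hsol s hs).hasDerivAt_truncNorm (by omega)) (fun s hs => ?_) ht
    have hloss : 0 ≤ ∑ i ∈ Finset.range (n + 1), (((i : ℝ) + 1) * p i + q i) * M i s :=
      Finset.sum_nonneg fun i hi => mul_nonneg (by have := hp i; have := hq i; positivity)
        (hMpos i (Nat.lt_succ_iff.mp (Finset.mem_range.mp hi)) s hs)
    linarith
  refine ⟨hnorm, fun i hi => ⟨hMpos i hi t ht, ?_⟩⟩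
  rw [le_div_iff₀ (by positivity), mul_comm]
  exact (mul_le_truncNorm hi (hxpos t ht) fun j hj => hMpos j hj t ht).trans hnorm

/-- a priori bound for global nonnegative solutions of the truncated
system: `‖yⁿ(t)‖ ≤ ‖yⁿ(0)‖ + (α+r)t` and, for every `i ≤ n`,
`0 ≤ Mᵢⁿ(t) ≤ (‖yⁿ(0)‖ + (α+r)t)/(i+1)`. -/
theorem trunc_apriori_bound
    (n : ℕ) (hn : 2 ≤ n) (k p q : ℕ → ℝ)
    (hk : ∀ i, 0 ≤ k i) (hp : ∀ i, 0 ≤ p i) (hq : ∀ i, 0 ≤ q i)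
    (r α : ℝ) (hr : 0 ≤ r) (hα : 0 ≤ α)
    (x : ℝ → ℝ) (M : ℕ → ℝ → ℝ)
    (hsol : ∀ t : ℝ, 0 ≤ t → TruncSol n k p q r α x M t)
    (hxpos : ∀ t : ℝ, 0 ≤ t → 0 ≤ x t)
    (hMpos : ∀ i ≤ n, ∀ t : ℝ, 0 ≤ t → 0 ≤ M i t) :
    ∀ t : ℝ, 0 ≤ t →
      TruncNorm n x M t ≤ TruncNorm n x M 0 + (α + r) * t ∧
      ∀ i ≤ n, 0 ≤ M i t ∧
        M i t ≤ (TruncNorm n x M 0 + (α + r) * t) / ((i : ℝ) + 1) :=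
  trunc_apriori_bound_general n hn k p q hp hq r α x M hsol hxpos hMpos
end
end

section
/- Let y be a solution of the silicosis system on [0,T) and (g_i) a real sequence. Fix 0 ≤ t_1 < t_2 < T with ∫_{t_1}^{t_2} Σ_i |g_{i+1}−g_i| k_i M_i(s) ds < ∞. If either (A) g_i = O(i) and ∫_{t_1}^{t_2} Σ_i g_i(p_i+q_i)M_i(s) ds < ∞, or (B) Σ_i g_i M_i(t_p) < ∞ for p = 1, 2 and g_{i+1} ≥ g_i ≥ 0 for sufficiently large i, then for every m ≥ 1: Σ_{i≥m} g_i M_i(t_2) − Σ_{i≥m} g_i M_i(t_1) + ∫_{t_1}^{t_2} Σ_{i≥m} g_i(p_i+q_i)M_i ds = ∫_{t_1}^{t_2} g_m x k_{m−1} M_{m−1} ds + ∫_{t_1}^{t_2} Σ_{i≥m}(g_{i+1}−g_i) x k_i M_i ds. -/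
/-!
Multiplying the equation for `Mᵢ` by `gᵢ` and integrating over `[t₁, t₂]` gives, for `i ≥ 1`,
`gᵢ (Mᵢ(t₂) - Mᵢ(t₁)) + ∫ gᵢ (pᵢ + qᵢ) Mᵢ = gᵢ (uᵢ₋₁ - uᵢ)` with `uᵢ = ∫ x kᵢ Mᵢ` the integrated
flux from class `i` to class `i + 1`. Summing over `i ≥ m` and summing by parts gives the identity
up to the boundary term `gₙ uₙ`, which converges because every other term does; hypothesis (5.1)
and the moment bound make `∑ |g_{i+1} - gᵢ| uᵢ` and `∑ uᵢ` finite.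

The limit of `gₙ uₙ` is `0`. Under (A), `|gₙ uₙ| ≤ C (n + 1) uₙ`, and `∑ uₙ < ∞` forces
`(n + 1) uₙ` to be small infinitely often. Under (B), if `i` minimises `u` on `[K, n]`, then
`gᵢ uᵢ ≤ g_K uₙ + ∑_{K ≤ j < n} (g_{j+1} - gⱼ) uⱼ`, which is small for `K` and then `n` large;
the loss series `∑ ∫ gᵢ (pᵢ + qᵢ) Mᵢ` is summable there because its terms are eventually
nonnegative and its partial sums are bounded by the summed balance. Sums and integrals are
interchanged since `∑ ∫ |·| < ∞` in each case.
-/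

open MeasureTheory Set Filter

noncomputable section

/-- A solution of the silicosis system (Definition 2.2) on the time domain `D`
(`D = Set.Ico 0 T` or `D = Set.Ici 0`): componentwise continuous, nonnegative,
with locally bounded norm `‖y(t)‖ = x(t) + ∑ (i+1) Mᵢ(t)`, the integrability
conditions, and the integrated versions of the equations. -/
structure IsSol (k p q : ℕ → ℝ) (r α : ℝ) (D : Set ℝ) (x : ℝ → ℝ) (M : ℕ → ℝ → ℝ) : Prop where
  x_nonneg : ∀ t ∈ D, 0 ≤ x t
  M_nonneg : ∀ (i : ℕ), ∀ t ∈ D, 0 ≤ M i t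
  x_cont : ContinuousOn x D
  M_cont : ∀ i : ℕ, ContinuousOn (M i) D
  summable_norm : ∀ t ∈ D, Summable (fun i : ℕ => ((i : ℝ) + 1) * M i t)
  norm_bdd : ∀ T' : ℝ, Icc (0:ℝ) T' ⊆ D →
    ∃ C : ℝ, ∀ t ∈ Icc (0:ℝ) T', x t + ∑' i : ℕ, ((i : ℝ) + 1) * M i t ≤ C
  summable_mom : ∀ t ∈ D,
    Summable (fun i : ℕ => ((i : ℝ) * p i + (i : ℝ) * q i + k i) * M i t)
  x_int : ∀ t ∈ D, IntervalIntegrable x volume 0 t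
  mom_int : ∀ t ∈ D,
    IntervalIntegrable (fun s => ∑' i : ℕ, ((i : ℝ) * p i + (i : ℝ) * q i + k i) * M i s)
      volume 0 t
  eq_M0 : ∀ t ∈ D,
    M 0 t = M 0 0 + r * t - ∫ s in (0:ℝ)..t, (k 0 * x s * M 0 s + (p 0 + q 0) * M 0 s)
  eq_M : ∀ i : ℕ, 1 ≤ i → ∀ t ∈ D,
    M i t = M i 0 + ∫ s in (0:ℝ)..t,
      (k (i-1) * x s * M (i-1) s - k i * x s * M i s - (p i + q i) * M i s)
  eq_x : ∀ t ∈ D,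
    x t = x 0 + α * t + ∫ s in (0:ℝ)..t,
      (-(x s * ∑' i : ℕ, k i * M i s) + ∑' i : ℕ, (i : ℝ) * q i * M i s)

open Topology

section Summation

variable {g u : ℕ → ℝ}

theorem sum_range_succ_mul_sub_eq (m n : ℕ) :
    ∑ j ∈ Finset.range (n + 1), g (m + j) * (u (m + j - 1) - u (m + j))
      = g m * u (m - 1) + ∑ j ∈ Finset.range n, (g (m + j + 1) - g (m + j)) * u (m + j)
        - g (m + n) * u (m + n) := by
  induction n with
  | zero => simp [mul_sub]
  | succ n ih =>
    rw [Finset.sum_range_succ, ih, Finset.sum_range_succ, show m + (n + 1) - 1 = m + n by omega,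
      ← add_assoc]
    ring

-- Since `0 - 1 = 0` in `ℕ`, the `i = 0` term of the first series is `0`.
theorem exists_tendsto_mul_of_summable (hG : Summable fun i => g i * (u (i - 1) - u i))
    (hΔ : Summable fun i => (g (i + 1) - g i) * u i) :
    ∃ c, Tendsto (fun n => g n * u n) atTop (𝓝 c) := by
  have hGn := (tendsto_add_atTop_iff_nat 1).2 hG.hasSum.tendsto_sum_nat
  refine ⟨_, ((tendsto_const_nhds (x := g 0 * u 0)).add hΔ.hasSum.tendsto_sum_nat).sub hGn
    |>.congr fun n => ?_⟩
  have := sum_range_succ_mul_sub_eq (g := g) (u := u) 0 n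
  simp only [zero_add, Nat.zero_sub] at this
  rw [this]
  ring

theorem tsum_mul_sub_eq (m : ℕ) (hG : Summable fun i => g i * (u (i - 1) - u i))
    (hΔ : Summable fun i => (g (i + 1) - g i) * u i)
    (h0 : Tendsto (fun n => g n * u n) atTop (𝓝 0)) :
    ∑' j, g (m + j) * (u (m + j - 1) - u (m + j))
      = g m * u (m - 1) + ∑' j, (g (m + j + 1) - g (m + j)) * u (m + j) := by
  have hGm : Summable fun j => g (m + j) * (u (m + j - 1) - u (m + j)) :=
    hG.comp_injective (add_right_injective m)
  have hΔm : Summable fun j => (g (m + j + 1) - g (m + j)) * u (m + j) :=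
    hΔ.comp_injective (add_right_injective m)
  have h0m : Tendsto (fun n => g (m + n) * u (m + n)) atTop (𝓝 0) :=
    (h0.comp (tendsto_add_atTop_nat m)).congr fun n => by simp [add_comm]
  refine tendsto_nhds_unique ((tendsto_add_atTop_iff_nat 1).2 hGm.hasSum.tendsto_sum_nat) ?_
  simpa only [sum_range_succ_mul_sub_eq, sub_zero] using
    (tendsto_const_nhds.add hΔm.hasSum.tendsto_sum_nat).sub h0m

theorem eq_zero_of_tendsto_of_frequently_abs_lt {f : ℕ → ℝ} {c : ℝ}
    (hf : Tendsto f atTop (𝓝 c)) (hsmall : ∀ ε > 0, ∃ᶠ n in atTop, |f n| < ε) : c = 0 := by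
  refine abs_eq_zero.1 (le_antisymm (le_of_forall_pos_le_add fun ε hε => ?_) (abs_nonneg c))
  have : ∃ᶠ y in 𝓝 |c|, y ∈ Iic ε :=
    hf.abs.frequently ((hsmall ε hε).mono fun n hn => hn.le)
  simpa using this.mem_of_closed isClosed_Iic

theorem frequently_natCast_add_one_mul_lt (hsum : Summable u) {δ : ℝ} (hδ : 0 < δ) :
    ∃ᶠ n : ℕ in atTop, ((n : ℝ) + 1) * u n < δ := by
  intro hlarge
  have hharmonic : Summable fun n : ℕ => 1 / ((n : ℝ) + 1) := by
    refine (hsum.mul_left δ⁻¹).of_norm_bounded_eventually_nat (hlarge.mono fun n hn => ?_)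
    rw [not_lt] at hn
    rw [Real.norm_of_nonneg (by positivity), one_div, inv_le_iff_one_le_mul₀ (by positivity)]
    calc 1 = δ⁻¹ * δ := (inv_mul_cancel₀ hδ.ne').symm
      _ ≤ δ⁻¹ * (((n : ℝ) + 1) * u n) := by gcongr
      _ = δ⁻¹ * u n * ((n : ℝ) + 1) := by ring
  exact Real.not_summable_one_div_natCast
    ((summable_nat_add_iff 1).1 (by exact_mod_cast hharmonic))

theorem frequently_abs_mul_lt_of_abs_le {C : ℝ} (hg : ∀ i, |g i| ≤ C * ((i : ℝ) + 1))
    (hu : ∀ n, 0 ≤ u n) (hsum : Summable u) {ε : ℝ} (hε : 0 < ε) :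
    ∃ᶠ n in atTop, |g n * u n| < ε := by
  have hC : 0 ≤ C := by simpa using (abs_nonneg _).trans (hg 0)
  refine (frequently_natCast_add_one_mul_lt hsum (div_pos hε (by linarith : 0 < C + 1))).mono
    fun n hn => ?_
  calc |g n * u n| = |g n| * u n := by rw [abs_mul, abs_of_nonneg (hu n)]
    _ ≤ (C + 1) * (((n : ℝ) + 1) * u n) := by
      nlinarith [hg n, hu n, mul_nonneg (by positivity : (0 : ℝ) ≤ (n : ℝ) + 1) (hu n)]
    _ < (C + 1) * (ε / (C + 1)) := by gcongr
    _ = ε := by field_simp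

theorem exists_mem_Icc_mul_le {N K n : ℕ} (hNK : N ≤ K) (hKn : K ≤ n)
    (hg : ∀ i ≥ N, 0 ≤ g i ∧ g i ≤ g (i + 1)) (hu : ∀ i, 0 ≤ u i) :
    ∃ i ∈ Finset.Icc K n,
      g i * u i ≤ g K * u n + ∑ j ∈ Finset.Ico K n, (g (j + 1) - g j) * u j := by
  obtain ⟨i, hi, hmin⟩ := Finset.exists_min_image (Finset.Icc K n) u ⟨K, by simp [hKn]⟩
  obtain ⟨hKi, hin⟩ := Finset.mem_Icc.1 hi
  have hmono : MonotoneOn g {x | N ≤ x} := monotoneOn_nat_Ici_of_le_succ fun j hj => (hg j hj).2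
  refine ⟨i, hi, ?_⟩
  calc g i * u i ≤ g n * u i :=
        mul_le_mul_of_nonneg_right (hmono (le_trans hNK hKi) (le_trans hNK hKn) hin) (hu i)
    _ = g K * u i + ∑ j ∈ Finset.Ico K n, (g (j + 1) - g j) * u i := by
        rw [← Finset.sum_mul, Finset.sum_Ico_sub g hKn]; ring
    _ ≤ g K * u n + ∑ j ∈ Finset.Ico K n, (g (j + 1) - g j) * u j := by
        gcongr with j hj
        · exact (hg K hNK).1
        · exact hmin n (by simp [hKn])
        · have := hg j (le_trans hNK (Finset.mem_Ico.1 hj).1); linarith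
        · exact hmin j (Finset.mem_Icc.2 ⟨(Finset.mem_Ico.1 hj).1, (Finset.mem_Ico.1 hj).2.le⟩)

theorem frequently_abs_mul_lt_of_eventually_monotone {N : ℕ}
    (hg : ∀ i ≥ N, 0 ≤ g i ∧ g i ≤ g (i + 1)) (hu : ∀ i, 0 ≤ u i) (hu0 : Tendsto u atTop (𝓝 0))
    (hΔ : Summable fun i => (g (i + 1) - g i) * u i) {ε : ℝ} (hε : 0 < ε) :
    ∃ᶠ n in atTop, |g n * u n| < ε := by
  rw [frequently_atTop]
  intro a
  obtain ⟨s, hs⟩ := hΔ.vanishing (Iio_mem_nhds (half_pos hε))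
  set K := max (max a N) (s.sup id + 1)
  have hdisj : ∀ n, Disjoint (Finset.Ico K n) s := fun n =>
    Finset.disjoint_left.2 fun j hj hjs => by
      have := Finset.le_sup (f := id) hjs
      have := (Finset.mem_Ico.1 hj).1
      simp only [id, K] at *
      omega
  obtain ⟨n, hgKu, hKn⟩ := (((hu0.const_mul (g K)).eventually
    (gt_mem_nhds (show g K * 0 < ε / 2 by simpa using half_pos hε))).and
      (eventually_ge_atTop K)).exists
  have hNK : N ≤ K := le_trans (le_max_right _ _) (le_max_left _ _)
  obtain ⟨i, hi, hle⟩ := exists_mem_Icc_mul_le hNK hKn hg hu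
  have hKi := (Finset.mem_Icc.1 hi).1
  refine ⟨i, le_trans (le_trans (le_max_left _ _) (le_max_left _ _)) hKi, ?_⟩
  rw [abs_of_nonneg (mul_nonneg (hg i (le_trans hNK hKi)).1 (hu i))]
  linarith [show ∑ j ∈ Finset.Ico K n, (g (j + 1) - g j) * u j < ε / 2 from hs _ (hdisj n)]

theorem summable_of_sub_add_eq_mul_sub {a b c : ℕ → ℝ} {N : ℕ}
    (h : ∀ i ≥ N, a i - b i + c i = g i * (u (i - 1) - u i)) (hb : Summable b)
    (hΔ : Summable fun i => (g (i + 1) - g i) * u i) (ha : ∀ i ≥ N, 0 ≤ a i)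
    (hc : ∀ i ≥ N, 0 ≤ c i) (hgu : ∀ i ≥ N, 0 ≤ g i * u i) : Summable c := by
  have hshift := add_right_injective N
  obtain ⟨A, hA⟩ := (hΔ.comp_injective hshift).hasSum.tendsto_sum_nat.bddAbove_range
  obtain ⟨B, hB⟩ := (hb.comp_injective hshift).hasSum.tendsto_sum_nat.bddAbove_range
  have hcN : Summable fun j => c (N + j) := by
    refine summable_of_sum_range_le (c := g N * u (N - 1) + A + B) (fun j => hc _ (by omega))
      fun n => ?_
    have hsplit : ∑ j ∈ Finset.range (n + 1), c (N + j)
        = ∑ j ∈ Finset.range (n + 1), g (N + j) * (u (N + j - 1) - u (N + j))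
          - ∑ j ∈ Finset.range (n + 1), a (N + j) + ∑ j ∈ Finset.range (n + 1), b (N + j) := by
      rw [← Finset.sum_sub_distrib, ← Finset.sum_add_distrib]
      exact Finset.sum_congr rfl fun j _ => by linarith [h (N + j) (by omega)]
    calc ∑ j ∈ Finset.range n, c (N + j) ≤ ∑ j ∈ Finset.range (n + 1), c (N + j) :=
          Finset.sum_le_sum_of_subset_of_nonneg (by simp) fun j _ _ => hc _ (by omega)
      _ ≤ g N * u (N - 1) + A + B := by
          rw [hsplit, sum_range_succ_mul_sub_eq]
          have := Finset.sum_nonneg fun j (_ : j ∈ Finset.range (n + 1)) => ha (N + j) (by omega)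
          have hAn : ∑ j ∈ Finset.range n, (g (N + j + 1) - g (N + j)) * u (N + j) ≤ A :=
            hA ⟨n, rfl⟩
          have hBn : ∑ j ∈ Finset.range (n + 1), b (N + j) ≤ B := hB ⟨n + 1, rfl⟩
          linarith [hgu (N + n) (by omega)]
  exact (summable_nat_add_iff N).1 (hcN.congr fun j => by rw [add_comm])

end Summation

section Integrals

variable {a b : ℝ} {F : ℕ → ℝ → ℝ}

theorem intervalIntegral_tsum_eq (hab : a ≤ b) (hF : ∀ i, IntervalIntegrable (F i) volume a b)
    (hsum : Summable fun i => ∫ s in a..b, |F i s|) :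
    ∫ s in a..b, ∑' i, F i s = ∑' i, ∫ s in a..b, F i s := by
  simp only [intervalIntegral.integral_of_le hab, ← Real.norm_eq_abs] at hsum ⊢
  exact (integral_tsum_of_summable_integral_norm (fun i => (hF i).1) hsum).symm

theorem summable_intervalIntegral_of_abs (hab : a ≤ b)
    (hsum : Summable fun i => ∫ s in a..b, |F i s|) : Summable fun i => ∫ s in a..b, F i s :=
  hsum.of_norm_bounded fun _ => intervalIntegral.abs_integral_le_integral_abs hab

theorem summable_intervalIntegral_of_nonneg (hab : a ≤ b)
    (hF : ∀ i, IntervalIntegrable (F i) volume a b) (hF0 : ∀ i, ∀ s ∈ Icc a b, 0 ≤ F i s)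
    (hsum : ∀ s ∈ Icc a b, Summable fun i => F i s)
    (hint : IntervalIntegrable (fun s => ∑' i, F i s) volume a b) :
    Summable fun i => ∫ s in a..b, F i s := by
  refine summable_of_sum_range_le (c := ∫ s in a..b, ∑' i, F i s)
    (fun i => intervalIntegral.integral_nonneg hab (hF0 i)) fun n => ?_
  rw [← intervalIntegral.integral_finsetSum fun i _ => hF i]
  have hsumint : IntervalIntegrable (fun s => ∑ i ∈ Finset.range n, F i s) volume a b := by
    rw [← Finset.sum_fn]
    exact IntervalIntegrable.sum _ fun i _ => hF i
  exact intervalIntegral.integral_mono_on hab hsumint hint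
    fun s hs => (hsum s hs).sum_le_tsum _ fun i _ => hF0 i s hs

theorem summable_intervalIntegral_of_eventually_le (hab : a ≤ b) {f : ℕ → ℝ → ℝ} {C : ℝ}
    (hf : ∀ i, IntervalIntegrable (f i) volume a b)
    (hF : ∀ i, IntervalIntegrable (F i) volume a b)
    (hsum : Summable fun i => ∫ s in a..b, F i s)
    (hle : ∀ᶠ i in atTop, ∀ s ∈ Icc a b, 0 ≤ f i s ∧ f i s ≤ C * F i s) :
    Summable fun i => ∫ s in a..b, f i s := by
  refine (hsum.mul_left C).of_norm_bounded_eventually_nat (hle.mono fun i hi => ?_)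
  rw [Real.norm_of_nonneg (intervalIntegral.integral_nonneg hab fun s hs => (hi s hs).1),
    ← intervalIntegral.integral_const_mul]
  exact intervalIntegral.integral_mono_on hab (hf i) ((hF i).const_mul C) fun s hs => (hi s hs).2

end Integrals

def flux (k : ℕ → ℝ) (x : ℝ → ℝ) (M : ℕ → ℝ → ℝ) (t1 t2 : ℝ) (i : ℕ) : ℝ :=
  ∫ s in t1..t2, x s * k i * M i s

namespace IsSol

variable {k p q : ℕ → ℝ} {r α : ℝ} {D : Set ℝ} {x : ℝ → ℝ} {M : ℕ → ℝ → ℝ} {t1 t2 : ℝ}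
  {g : ℕ → ℝ}

theorem continuousOn_uIcc (hsol : IsSol k p q r α D x M) (hD : Icc t1 t2 ⊆ D) (ht : t1 ≤ t2) :
    ContinuousOn x (uIcc t1 t2) ∧ ∀ i, ContinuousOn (M i) (uIcc t1 t2) := by
  rw [uIcc_of_le ht]
  exact ⟨hsol.x_cont.mono hD, fun i => (hsol.M_cont i).mono hD⟩

theorem flux_nonneg (hsol : IsSol k p q r α D x M) (hD : Icc t1 t2 ⊆ D) (ht : t1 ≤ t2)
    (hk : ∀ i, 0 ≤ k i) (i : ℕ) : 0 ≤ flux k x M t1 t2 i :=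
  intervalIntegral.integral_nonneg ht fun s hs =>
    mul_nonneg (mul_nonneg (hsol.x_nonneg s (hD hs)) (hk i)) (hsol.M_nonneg i s (hD hs))

theorem sub_mul_flux_eq (i : ℕ) :
    (g (i + 1) - g i) * flux k x M t1 t2 i
      = ∫ s in t1..t2, (g (i + 1) - g i) * x s * k i * M i s := by
  simp only [flux, ← intervalIntegral.integral_const_mul, mul_assoc]

theorem balance (hsol : IsSol k p q r α D x M) (hD : Icc 0 t2 ⊆ D) (ht1 : 0 ≤ t1)
    (ht : t1 ≤ t2) (g : ℕ → ℝ) {i : ℕ} (hi : 1 ≤ i) :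
    g i * M i t2 - g i * M i t1 + ∫ s in t1..t2, g i * (p i + q i) * M i s
      = g i * (flux k x M t1 t2 (i - 1) - flux k x M t1 t2 i) := by
  obtain ⟨hx, hM⟩ := hsol.continuousOn_uIcc hD (ht1.trans ht)
  have ht1_mem : t1 ∈ uIcc 0 t2 := Icc_subset_uIcc ⟨ht1, ht⟩
  have hint : ∀ {f : ℝ → ℝ}, ContinuousOn f (uIcc 0 t2) → IntervalIntegrable f volume t1 t2 :=
    fun hf => hf.intervalIntegrable.mono_set (uIcc_subset_uIcc ht1_mem right_mem_uIcc)
  have hf : IntervalIntegrable (fun s => k (i - 1) * x s * M (i - 1) s - k i * x s * M i s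
      - (p i + q i) * M i s) volume 0 t2 := (by fun_prop : ContinuousOn _ _).intervalIntegrable
  have hdiff : M i t2 - M i t1 = ∫ s in t1..t2,
      (k (i - 1) * x s * M (i - 1) s - k i * x s * M i s - (p i + q i) * M i s) := by
    rw [hsol.eq_M i hi t2 (hD (right_mem_Icc.2 (ht1.trans ht))),
      hsol.eq_M i hi t1 (hD ⟨ht1, ht⟩), add_sub_add_left_eq_sub,
      intervalIntegral.integral_interval_sub_left hf
        (hf.mono_set (uIcc_subset_uIcc left_mem_uIcc ht1_mem))]
  have hsplit : ∫ s in t1..t2,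
      (k (i - 1) * x s * M (i - 1) s - k i * x s * M i s - (p i + q i) * M i s)
      = flux k x M t1 t2 (i - 1) - flux k x M t1 t2 i - ∫ s in t1..t2, (p i + q i) * M i s := by
    rw [flux, flux, ← intervalIntegral.integral_sub (hint (by fun_prop)) (hint (by fun_prop)),
      ← intervalIntegral.integral_sub ((hint (by fun_prop)).sub (hint (by fun_prop)))
        (hint (by fun_prop))]
    exact intervalIntegral.integral_congr fun s _ => by ring
  have hloss : ∫ s in t1..t2, g i * (p i + q i) * M i s
      = g i * ∫ s in t1..t2, (p i + q i) * M i s := by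
    simp only [← intervalIntegral.integral_const_mul, mul_assoc]
  rw [hloss]
  linear_combination g i * (hdiff.trans hsplit)

theorem summable_integral_moment (hsol : IsSol k p q r α D x M) (hD : Icc t1 t2 ⊆ D)
    (ht : t1 ≤ t2) (hk : ∀ i, 0 ≤ k i) (hp : ∀ i, 0 ≤ p i) (hq : ∀ i, 0 ≤ q i) :
    Summable fun i : ℕ => ∫ s in t1..t2, ((i : ℝ) * p i + (i : ℝ) * q i + k i) * M i s := by
  obtain ⟨-, hM⟩ := hsol.continuousOn_uIcc hD ht
  refine summable_intervalIntegral_of_nonneg ht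
    (fun i => (by fun_prop : ContinuousOn _ _).intervalIntegrable)
    (fun i s hs => mul_nonneg (by have := hp i; have := hq i; have := hk i; positivity)
      (hsol.M_nonneg i s (hD hs)))
    (fun s hs => hsol.summable_mom s (hD hs)) ?_
  exact (hsol.mom_int t1 (hD (left_mem_Icc.2 ht))).symm.trans
    (hsol.mom_int t2 (hD (right_mem_Icc.2 ht)))

theorem summable_flux (hsol : IsSol k p q r α D x M) (hD : Icc t1 t2 ⊆ D) (ht : t1 ≤ t2)
    (hk : ∀ i, 0 ≤ k i) (hp : ∀ i, 0 ≤ p i) (hq : ∀ i, 0 ≤ q i) :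
    Summable (flux k x M t1 t2) := by
  obtain ⟨hx, hM⟩ := hsol.continuousOn_uIcc hD ht
  obtain ⟨B, hB⟩ := isCompact_Icc.exists_bound_of_continuousOn (hsol.x_cont.mono hD)
  refine summable_intervalIntegral_of_eventually_le ht (C := B)
    (fun i => (by fun_prop : ContinuousOn _ _).intervalIntegrable)
    (fun i => (by fun_prop : ContinuousOn _ _).intervalIntegrable)
    (hsol.summable_integral_moment hD ht hk hp hq) (Eventually.of_forall fun i s hs => ?_)
  have hx0 := hsol.x_nonneg s (hD hs)
  have hxB : x s ≤ B := le_of_abs_le (hB s hs)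
  have hkM : 0 ≤ k i * M i s := mul_nonneg (hk i) (hsol.M_nonneg i s (hD hs))
  have hmom : k i * M i s ≤ ((i : ℝ) * p i + (i : ℝ) * q i + k i) * M i s := by
    have := mul_nonneg (mul_nonneg (Nat.cast_nonneg i) (add_nonneg (hp i) (hq i)))
      (hsol.M_nonneg i s (hD hs))
    nlinarith
  constructor
  · rw [mul_assoc]; exact mul_nonneg hx0 hkM
  · rw [mul_assoc]; nlinarith

theorem summable_integral_abs_sub_mul (hsol : IsSol k p q r α D x M) (hD : Icc t1 t2 ⊆ D)
    (ht : t1 ≤ t2) (hk : ∀ i, 0 ≤ k i)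
    (hsum : ∀ s ∈ Icc t1 t2, Summable fun i => |g (i + 1) - g i| * k i * M i s)
    (hint : IntervalIntegrable (fun s => ∑' i, |g (i + 1) - g i| * k i * M i s) volume t1 t2) :
    Summable fun i => ∫ s in t1..t2, |(g (i + 1) - g i) * x s * k i * M i s| := by
  obtain ⟨hx, hM⟩ := hsol.continuousOn_uIcc hD ht
  obtain ⟨B, hB⟩ := isCompact_Icc.exists_bound_of_continuousOn (hsol.x_cont.mono hD)
  have hkM : ∀ i, ∀ s ∈ Icc t1 t2, 0 ≤ |g (i + 1) - g i| * k i * M i s := fun i s hs =>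
    mul_nonneg (mul_nonneg (abs_nonneg _) (hk i)) (hsol.M_nonneg i s (hD hs))
  refine summable_intervalIntegral_of_eventually_le ht (C := B)
    (fun i => (by fun_prop : ContinuousOn _ _).intervalIntegrable)
    (fun i => (by fun_prop : ContinuousOn _ _).intervalIntegrable)
    (summable_intervalIntegral_of_nonneg ht
      (fun i => (by fun_prop : ContinuousOn _ _).intervalIntegrable) hkM hsum hint)
    (Eventually.of_forall fun i s hs => ⟨abs_nonneg _, ?_⟩)
  calc |(g (i + 1) - g i) * x s * k i * M i s| = |x s| * (|g (i + 1) - g i| * k i * M i s) := by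
        rw [abs_mul, abs_mul, abs_mul, abs_of_nonneg (hk i),
          abs_of_nonneg (hsol.M_nonneg i s (hD hs))]
        ring
    _ ≤ B * (|g (i + 1) - g i| * k i * M i s) := by
        gcongr
        · exact hkM i s hs
        · simpa using hB s hs

theorem summable_sub_mul_flux (ht : t1 ≤ t2)
    (hΔ : Summable fun i => ∫ s in t1..t2, |(g (i + 1) - g i) * x s * k i * M i s|) :
    Summable fun i => (g (i + 1) - g i) * flux k x M t1 t2 i := by
  simpa only [sub_mul_flux_eq] using summable_intervalIntegral_of_abs ht hΔ

theorem summable_mul_of_abs_le (hsol : IsSol k p q r α D x M) {C t : ℝ} (ht : t ∈ D)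
    (hC : ∀ i : ℕ, |g i| ≤ C * ((i : ℝ) + 1)) : Summable fun i => g i * M i t :=
  ((hsol.summable_norm t ht).mul_left C).of_norm_bounded fun i => by
    rw [norm_mul, Real.norm_eq_abs, Real.norm_of_nonneg (hsol.M_nonneg i t ht), ← mul_assoc]
    exact mul_le_mul_of_nonneg_right (hC i) (hsol.M_nonneg i t ht)

theorem summable_integral_abs_loss_of_abs_le (hsol : IsSol k p q r α D x M)
    (hD : Icc t1 t2 ⊆ D) (ht : t1 ≤ t2) (hk : ∀ i, 0 ≤ k i) (hp : ∀ i, 0 ≤ p i)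
    (hq : ∀ i, 0 ≤ q i) {C : ℝ} (hC : ∀ i : ℕ, |g i| ≤ C * ((i : ℝ) + 1)) :
    Summable fun i => ∫ s in t1..t2, |g i * (p i + q i) * M i s| := by
  obtain ⟨-, hM⟩ := hsol.continuousOn_uIcc hD ht
  have hC0 : 0 ≤ C := by simpa using (abs_nonneg _).trans (hC 0)
  refine summable_intervalIntegral_of_eventually_le ht (C := 2 * C)
    (fun i => (by fun_prop : ContinuousOn _ _).intervalIntegrable)
    (fun i => (by fun_prop : ContinuousOn _ _).intervalIntegrable)
    (hsol.summable_integral_moment hD ht hk hp hq)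
    ((eventually_ge_atTop 1).mono fun i hi s hs => ⟨abs_nonneg _, ?_⟩)
  have hM0 := hsol.M_nonneg i s (hD hs)
  have hi' : (1 : ℝ) ≤ i := by exact_mod_cast hi
  have hpq : 0 ≤ (p i + q i) * M i s := mul_nonneg (add_nonneg (hp i) (hq i)) hM0
  calc |g i * (p i + q i) * M i s| = |g i| * ((p i + q i) * M i s) := by
        rw [mul_assoc, abs_mul, abs_of_nonneg hpq]
    _ ≤ (2 * C * i) * ((p i + q i) * M i s) := by
        gcongr
        linarith [hC i, mul_le_mul_of_nonneg_left hi' hC0]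
    _ ≤ 2 * C * (((i : ℝ) * p i + (i : ℝ) * q i + k i) * M i s) := by
        have := mul_nonneg (mul_nonneg (mul_nonneg zero_le_two hC0) (hk i)) hM0
        nlinarith

theorem summable_balance (hsol : IsSol k p q r α D x M) (hD : Icc 0 t2 ⊆ D) (ht1 : 0 ≤ t1)
    (ht : t1 ≤ t2) (h1 : Summable fun i => g i * M i t1) (h2 : Summable fun i => g i * M i t2)
    (hloss : Summable fun i => ∫ s in t1..t2, |g i * (p i + q i) * M i s|) :
    Summable fun i => g i * (flux k x M t1 t2 (i - 1) - flux k x M t1 t2 i) := by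
  rw [← summable_nat_add_iff 1]
  exact (((h2.sub h1).add (summable_intervalIntegral_of_abs ht hloss)).comp_injective
    (add_left_injective 1)).congr fun i => hsol.balance hD ht1 ht g (Nat.le_add_left 1 i)

theorem summable_integral_abs_loss_of_eventually_monotone (hsol : IsSol k p q r α D x M)
    (hD : Icc 0 t2 ⊆ D) (ht1 : 0 ≤ t1) (ht : t1 ≤ t2) (hk : ∀ i, 0 ≤ k i) (hp : ∀ i, 0 ≤ p i)
    (hq : ∀ i, 0 ≤ q i) (h1 : Summable fun i => g i * M i t1) {N : ℕ}
    (hg : ∀ i ≥ N, 0 ≤ g i ∧ g i ≤ g (i + 1))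
    (hΔ : Summable fun i => (g (i + 1) - g i) * flux k x M t1 t2 i) :
    Summable fun i => ∫ s in t1..t2, |g i * (p i + q i) * M i s| := by
  have hD' : Icc t1 t2 ⊆ D := (Icc_subset_Icc_left ht1).trans hD
  have hintegrand : ∀ i ≥ N, ∀ s ∈ Icc t1 t2, 0 ≤ g i * (p i + q i) * M i s := fun i hi s hs =>
    mul_nonneg (mul_nonneg (hg i hi).1 (add_nonneg (hp i) (hq i))) (hsol.M_nonneg i s (hD' hs))
  have hloss : Summable fun i => ∫ s in t1..t2, g i * (p i + q i) * M i s :=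
    summable_of_sub_add_eq_mul_sub (N := max N 1) (a := fun i => g i * M i t2)
      (fun i hi => hsol.balance hD ht1 ht g (le_of_max_le_right hi)) h1 hΔ
      (fun i hi => mul_nonneg (hg i (le_of_max_le_left hi)).1
        (hsol.M_nonneg i t2 (hD' (right_mem_Icc.2 ht))))
      (fun i hi => intervalIntegral.integral_nonneg ht (hintegrand i (le_of_max_le_left hi)))
      (fun i hi => mul_nonneg (hg i (le_of_max_le_left hi)).1 (hsol.flux_nonneg hD' ht hk i))
  refine hloss.congr_atTop ((eventually_ge_atTop N).mono fun i hi => ?_)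
  exact intervalIntegral.integral_congr fun s hs =>
    (abs_of_nonneg (hintegrand i hi s (uIcc_of_le ht ▸ hs))).symm

theorem moment_identity_of_tendsto (hsol : IsSol k p q r α D x M) (hD : Icc 0 t2 ⊆ D)
    (ht1 : 0 ≤ t1) (ht : t1 ≤ t2) (h1 : Summable fun i => g i * M i t1)
    (h2 : Summable fun i => g i * M i t2)
    (hloss : Summable fun i => ∫ s in t1..t2, |g i * (p i + q i) * M i s|)
    (hΔ : Summable fun i => ∫ s in t1..t2, |(g (i + 1) - g i) * x s * k i * M i s|)
    (h0 : Tendsto (fun n => g n * flux k x M t1 t2 n) atTop (𝓝 0)) {m : ℕ} (hm : 1 ≤ m) :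
    (∑' i, g (m + i) * M (m + i) t2) - (∑' i, g (m + i) * M (m + i) t1)
        + (∫ s in t1..t2, ∑' i, g (m + i) * (p (m + i) + q (m + i)) * M (m + i) s)
      = (∫ s in t1..t2, g m * x s * k (m - 1) * M (m - 1) s)
        + ∫ s in t1..t2, ∑' i, (g (m + i + 1) - g (m + i)) * x s * k (m + i) * M (m + i) s := by
  obtain ⟨hx, hM⟩ := hsol.continuousOn_uIcc ((Icc_subset_Icc_left ht1).trans hD) ht
  have hshift := add_right_injective m
  have hs1 : Summable fun i => g (m + i) * M (m + i) t1 := h1.comp_injective hshift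
  have hs2 : Summable fun i => g (m + i) * M (m + i) t2 := h2.comp_injective hshift
  have hsloss : Summable fun i =>
      ∫ s in t1..t2, g (m + i) * (p (m + i) + q (m + i)) * M (m + i) s :=
    (summable_intervalIntegral_of_abs ht hloss).comp_injective hshift
  have hflux : ∫ s in t1..t2, g m * x s * k (m - 1) * M (m - 1) s
      = g m * flux k x M t1 t2 (m - 1) := by
    simp only [flux, ← intervalIntegral.integral_const_mul, mul_assoc]
  rw [intervalIntegral_tsum_eq ht (fun i => (by fun_prop : ContinuousOn _ _).intervalIntegrable)
      (hloss.comp_injective hshift),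
    intervalIntegral_tsum_eq ht (fun i => (by fun_prop : ContinuousOn _ _).intervalIntegrable)
      (hΔ.comp_injective hshift),
    ← hs2.tsum_sub hs1, ← (hs2.sub hs1).tsum_add hsloss,
    tsum_congr fun j => hsol.balance hD ht1 ht g (hm.trans (Nat.le_add_right m j)),
    tsum_mul_sub_eq m (hsol.summable_balance hD ht1 ht h1 h2 hloss)
      (summable_sub_mul_flux ht hΔ) h0, hflux]
  simp only [sub_mul_flux_eq]

end IsSol

theorem silicosis_moment_identity_general
    (k p q : ℕ → ℝ)
    (hk : ∀ i, 0 ≤ k i) (hp : ∀ i, 0 ≤ p i) (hq : ∀ i, 0 ≤ q i)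
    (r α : ℝ)
    (T : ℝ) (x : ℝ → ℝ) (M : ℕ → ℝ → ℝ)
    (hsol : IsSol k p q r α (Set.Ico 0 T) x M)
    (g : ℕ → ℝ) (t1 t2 : ℝ) (ht1 : 0 ≤ t1) (ht12 : t1 < t2) (ht2 : t2 < T)
    -- hypothesis (5.1): ∫_{t₁}^{t₂} ∑ᵢ |g_{i+1}−gᵢ| kᵢ Mᵢ < ∞
    (h51sum : ∀ s ∈ Icc t1 t2, Summable (fun i : ℕ => |g (i+1) - g i| * k i * M i s))
    (h51int : IntervalIntegrable
      (fun s => ∑' i : ℕ, |g (i+1) - g i| * k i * M i s) volume t1 t2)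
    -- hypothesis (A) or hypothesis (B)
    (hAB :
      ((∃ CA : ℝ, ∀ i : ℕ, |g i| ≤ CA * ((i : ℝ) + 1)) ∧
        (∀ s ∈ Icc t1 t2, Summable (fun i : ℕ => g i * (p i + q i) * M i s)) ∧
        IntervalIntegrable (fun s => ∑' i : ℕ, g i * (p i + q i) * M i s) volume t1 t2)
      ∨
      ((Summable (fun i : ℕ => g i * M i t1) ∧ Summable (fun i : ℕ => g i * M i t2)) ∧
        (∃ N : ℕ, ∀ i ≥ N, 0 ≤ g i ∧ g i ≤ g (i+1)))) :
    ∀ m : ℕ, 1 ≤ m →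
      (∑' i : ℕ, g (m+i) * M (m+i) t2) - (∑' i : ℕ, g (m+i) * M (m+i) t1)
        + (∫ s in t1..t2, ∑' i : ℕ, g (m+i) * (p (m+i) + q (m+i)) * M (m+i) s)
      = (∫ s in t1..t2, g m * x s * k (m-1) * M (m-1) s)
        + ∫ s in t1..t2, ∑' i : ℕ, (g (m+i+1) - g (m+i)) * x s * k (m+i) * M (m+i) s := by
  intro m hm
  have hD : Icc 0 t2 ⊆ Ico 0 T := fun s hs => ⟨hs.1, hs.2.trans_lt ht2⟩
  have hD' : Icc t1 t2 ⊆ Ico 0 T := (Icc_subset_Icc_left ht1).trans hD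
  have hu0 := hsol.flux_nonneg hD' ht12.le hk
  have hu := hsol.summable_flux hD' ht12.le hk hp hq
  have hΔ := hsol.summable_integral_abs_sub_mul hD' ht12.le hk h51sum h51int
  have hΔu := IsSol.summable_sub_mul_flux ht12.le hΔ
  obtain ⟨h1, h2, hloss⟩ : Summable (fun i => g i * M i t1) ∧ Summable (fun i => g i * M i t2) ∧
      Summable fun i => ∫ s in t1..t2, |g i * (p i + q i) * M i s| := by
    rcases hAB with ⟨⟨C, hC⟩, -⟩ | ⟨⟨h1, h2⟩, N, hN⟩
    · exact ⟨hsol.summable_mul_of_abs_le (hD' (left_mem_Icc.2 ht12.le)) hC,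
        hsol.summable_mul_of_abs_le (hD' (right_mem_Icc.2 ht12.le)) hC,
        hsol.summable_integral_abs_loss_of_abs_le hD' ht12.le hk hp hq hC⟩
    · exact ⟨h1, h2,
        hsol.summable_integral_abs_loss_of_eventually_monotone hD ht1 ht12.le hk hp hq h1 hN hΔu⟩
  obtain ⟨c, hc⟩ :=
    exists_tendsto_mul_of_summable (hsol.summable_balance hD ht1 ht12.le h1 h2 hloss) hΔu
  obtain rfl : c = 0 := eq_zero_of_tendsto_of_frequently_abs_lt hc fun ε hε => by
    rcases hAB with ⟨⟨C, hC⟩, -⟩ | ⟨-, N, hN⟩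
    · exact frequently_abs_mul_lt_of_abs_le hC hu0 hu hε
    · exact frequently_abs_mul_lt_of_eventually_monotone hN hu0 hu.tendsto_atTop_zero hΔu hε
  exact hsol.moment_identity_of_tendsto hD ht1 ht12.le h1 h2 hloss hΔ hc hm

/-- the integrated moment identity (Theorem 5.1). Under hypothesis
(5.1) and either hypothesis set (A) or (B), for every `m ≥ 1`,
`∑_{i≥m} gᵢ Mᵢ(t₂) − ∑_{i≥m} gᵢ Mᵢ(t₁) + ∫_{t₁}^{t₂} ∑_{i≥m} gᵢ(pᵢ+qᵢ)Mᵢ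
 = ∫_{t₁}^{t₂} g_m x k_{m−1} M_{m−1} + ∫_{t₁}^{t₂} ∑_{i≥m}(g_{i+1}−gᵢ) x kᵢ Mᵢ`. -/
theorem silicosis_moment_identity
    (k p q : ℕ → ℝ)
    (hk : ∀ i, 0 ≤ k i) (hp : ∀ i, 0 ≤ p i) (hq : ∀ i, 0 ≤ q i)
    (r α : ℝ) (hr : 0 ≤ r) (hα : 0 ≤ α)
    (T : ℝ) (x : ℝ → ℝ) (M : ℕ → ℝ → ℝ)
    (hsol : IsSol k p q r α (Set.Ico 0 T) x M)
    (g : ℕ → ℝ) (t1 t2 : ℝ) (ht1 : 0 ≤ t1) (ht12 : t1 < t2) (ht2 : t2 < T)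
    -- hypothesis (5.1): ∫_{t₁}^{t₂} ∑ᵢ |g_{i+1}−gᵢ| kᵢ Mᵢ < ∞
    (h51sum : ∀ s ∈ Icc t1 t2, Summable (fun i : ℕ => |g (i+1) - g i| * k i * M i s))
    (h51int : IntervalIntegrable
      (fun s => ∑' i : ℕ, |g (i+1) - g i| * k i * M i s) volume t1 t2)
    -- hypothesis (A) or hypothesis (B)
    (hAB :
      ((∃ CA : ℝ, ∀ i : ℕ, |g i| ≤ CA * ((i : ℝ) + 1)) ∧
        (∀ s ∈ Icc t1 t2, Summable (fun i : ℕ => g i * (p i + q i) * M i s)) ∧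
        IntervalIntegrable (fun s => ∑' i : ℕ, g i * (p i + q i) * M i s) volume t1 t2)
      ∨
      ((Summable (fun i : ℕ => g i * M i t1) ∧ Summable (fun i : ℕ => g i * M i t2)) ∧
        (∃ N : ℕ, ∀ i ≥ N, 0 ≤ g i ∧ g i ≤ g (i+1)))) :
    ∀ m : ℕ, 1 ≤ m →
      (∑' i : ℕ, g (m+i) * M (m+i) t2) - (∑' i : ℕ, g (m+i) * M (m+i) t1)
        + (∫ s in t1..t2, ∑' i : ℕ, g (m+i) * (p (m+i) + q (m+i)) * M (m+i) s)
      = (∫ s in t1..t2, g m * x s * k (m-1) * M (m-1) s)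
        + ∫ s in t1..t2, ∑' i : ℕ, (g (m+i+1) - g (m+i)) * x s * k (m+i) * M (m+i) s :=
  silicosis_moment_identity_general k p q hk hp hq r α T x M hsol g t1 t2 ht1 ht12 ht2 h51sum h51int
    hAB
end
end

section
/- Every solution y of the silicosis system on [0,T) satisfies the mass balance identity 𝒰(y(t)) − 𝒰(y(0)) = (r+α)t − ∫_0^t Σ_{i≥0}(p_i+q_i)M_i(s) ds − ∫_0^t Σ_{i≥1} i p_i M_i(s) ds for all t ∈ [0,T), where 𝒰(y) = x + Σ_{i≥0}(i+1)M_i. -/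
/-! Fix `t` and let `aₙ = ∫₀ᵗ kₙ x Mₙ` be the flux from size `n` to size `n + 1` and
`cₙ = ∫₀ᵗ (pₙ + qₙ) Mₙ` the loss of size `n`. The equations for the `Mₙ` read
`ΔM₀ = r t - a₀ - c₀` and `ΔMₙ₊₁ = aₙ - aₙ₊₁ - cₙ₊₁`, so summation by parts gives
`∑_{n ≤ N} (n + 1) ΔMₙ = r t + ∑_{n < N} aₙ - (N + 1) a_N - ∑_{n ≤ N} (n + 1) cₙ`.
Every series here converges by dominated convergence against the moment
`∑ (n pₙ + n qₙ + kₙ) Mₙ`, hence so does the boundary term `(N + 1) a_N`, and its limit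
vanishes because `∑ aₙ < ∞`. In the equation for `x` the same total flux `∑ aₙ` appears
with the opposite sign. -/

open MeasureTheory Set Filter

noncomputable section

/-- The total amount of matter `𝒰(y(t)) = x(t) + ∑_{i≥0} (i+1) Mᵢ(t)`. -/
def Utot (x : ℝ → ℝ) (M : ℕ → ℝ → ℝ) (t : ℝ) : ℝ :=
  x t + ∑' i : ℕ, ((i : ℝ) + 1) * M i t

open Topology Asymptotics

theorem eq_zero_of_summable_of_tendsto_succ_mul {a : ℕ → ℝ} (ha : Summable a) {ℓ : ℝ}
    (h : Tendsto (fun n : ℕ => ((n : ℝ) + 1) * a n) atTop (𝓝 ℓ)) : ℓ = 0 := by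
  by_contra hℓ
  have hO : (fun n : ℕ => 1 / ((n : ℝ) + 1)) =O[atTop] a :=
    isBigO_of_div_tendsto_nhds_of_ne_zero (h.congr fun n => by field_simp) hℓ
  refine Real.not_summable_one_div_natCast ((summable_nat_add_iff 1).1 ?_)
  exact_mod_cast summable_of_isBigO_nat ha hO

theorem sum_range_succ_mul_of_chain {ρ : ℝ} {a c d : ℕ → ℝ} (h0 : d 0 = ρ - a 0 - c 0)
    (hsucc : ∀ j, d (j + 1) = a j - a (j + 1) - c (j + 1)) (N : ℕ) :
    ∑ i ∈ Finset.range (N + 1), ((i : ℝ) + 1) * d i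
      = ρ + ∑ i ∈ Finset.range N, a i - ((N : ℝ) + 1) * a N
        - ∑ i ∈ Finset.range (N + 1), ((i : ℝ) + 1) * c i := by
  induction N with
  | zero => simp [h0]
  | succ N ih =>
    rw [Finset.sum_range_succ (fun i : ℕ => ((i : ℝ) + 1) * d i), ih, Finset.sum_range_succ a,
      Finset.sum_range_succ (fun i : ℕ => ((i : ℝ) + 1) * c i) (N + 1), hsucc]
    push_cast
    ring

theorem eq_of_chain_of_hasSum {ρ A K Δ : ℝ} {a c d : ℕ → ℝ} (h0 : d 0 = ρ - a 0 - c 0)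
    (hsucc : ∀ j, d (j + 1) = a j - a (j + 1) - c (j + 1))
    (hd : HasSum (fun i : ℕ => ((i : ℝ) + 1) * d i) Δ) (ha : HasSum a A)
    (hc : HasSum (fun i : ℕ => ((i : ℝ) + 1) * c i) K) : Δ = ρ + A - K := by
  have hlim : Tendsto (fun N : ℕ => ((N : ℝ) + 1) * a N) atTop (𝓝 (ρ + A - Δ - K)) := by
    have hshift := tendsto_add_atTop_nat 1
    refine (((tendsto_const_nhds.add ha.tendsto_sum_nat).sub
      (hd.tendsto_sum_nat.comp hshift)).sub (hc.tendsto_sum_nat.comp hshift)).congr fun N => ?_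
    simp only [Function.comp_apply, sum_range_succ_mul_of_chain h0 hsucc N]
    ring
  linarith [eq_zero_of_summable_of_tendsto_succ_mul ha.summable hlim]

section SeriesIntegral

variable {E : Type*} [NormedAddCommGroup E] [CompleteSpace E] {a b : ℝ}
  {f : ℕ → ℝ → E} {g : ℕ → ℝ → ℝ} {G : ℝ → ℝ}

theorem intervalIntegrable_tsum_of_norm_le (hf : ∀ i, ContinuousOn (f i) (uIcc a b))
    (hfg : ∀ s ∈ uIcc a b, ∀ i, ‖f i s‖ ≤ g i s) (hg : ∀ s ∈ uIcc a b, HasSum (g · s) (G s))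
    (hG : IntervalIntegrable G volume a b) :
    IntervalIntegrable (fun s => ∑' i, f i s) volume a b := by
  refine hG.mono_fun' ?_ (ae_restrict_of_forall_mem measurableSet_uIoc fun s hs =>
    tsum_of_norm_bounded (hg s (uIoc_subset_uIcc hs)) (hfg s (uIoc_subset_uIcc hs)))
  refine aestronglyMeasurable_of_tendsto_ae atTop (f := fun n s => ∑ i ∈ Finset.range n, f i s)
    (fun n => ?_) (ae_restrict_of_forall_mem measurableSet_uIoc fun s hs => ?_)
  · exact ((continuousOn_finsetSum _ fun i _ => hf i).mono uIoc_subset_uIcc).aestronglyMeasurable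
      measurableSet_uIoc
  · have hs' := uIoc_subset_uIcc hs
    exact ((hg s hs').summable.of_norm_bounded (hfg s hs')).hasSum.tendsto_sum_nat

theorem hasSum_intervalIntegral_of_norm_le [NormedSpace ℝ E]
    (hf : ∀ i, ContinuousOn (f i) (uIcc a b)) (hfg : ∀ s ∈ uIcc a b, ∀ i, ‖f i s‖ ≤ g i s)
    (hg : ∀ s ∈ uIcc a b, HasSum (g · s) (G s)) (hG : IntervalIntegrable G volume a b) :
    HasSum (fun i => ∫ s in a..b, f i s) (∫ s in a..b, ∑' i, f i s) := by
  refine intervalIntegral.hasSum_integral_of_dominated_convergence g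
    (fun i => ((hf i).mono uIoc_subset_uIcc).aestronglyMeasurable measurableSet_uIoc)
    (fun i => ae_of_all _ fun s hs => hfg s (uIoc_subset_uIcc hs) i)
    (ae_of_all _ fun s hs => (hg s (uIoc_subset_uIcc hs)).summable)
    (hG.congr fun s hs => ((hg s (uIoc_subset_uIcc hs)).tsum_eq).symm)
    (ae_of_all _ fun s hs => ?_)
  have hs' := uIoc_subset_uIcc hs
  exact ((hg s hs').summable.of_norm_bounded (hfg s hs')).hasSum

end SeriesIntegral

section Solution

variable {k p q : ℕ → ℝ} {r α : ℝ} {D : Set ℝ} {x : ℝ → ℝ} {M : ℕ → ℝ → ℝ} {t : ℝ}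

theorem IsSol.exists_bound_x (hsol : IsSol k p q r α D x M) (hD : Icc 0 t ⊆ D) :
    ∃ C, ∀ s ∈ Icc 0 t, x s ≤ C := by
  obtain ⟨C, hC⟩ := hsol.norm_bdd t hD
  refine ⟨C, fun s hs => (le_add_of_nonneg_right ?_).trans (hC s hs)⟩
  exact tsum_nonneg fun i => mul_nonneg (by positivity) (hsol.M_nonneg i s (hD hs))

theorem IsSol.continuousOn_uptake (hsol : IsSol k p q r α D x M) (hD : Icc 0 t ⊆ D) (i : ℕ) :
    ContinuousOn (fun s => k i * x s * M i s) (Icc 0 t) :=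
  (continuousOn_const.mul (hsol.x_cont.mono hD)).mul ((hsol.M_cont i).mono hD)

theorem IsSol.continuousOn_const_mul_M (hsol : IsSol k p q r α D x M) (hD : Icc 0 t ⊆ D)
    (c : ℝ) (i : ℕ) : ContinuousOn (fun s => c * M i s) (Icc 0 t) :=
  continuousOn_const.mul ((hsol.M_cont i).mono hD)

theorem IsSol.integrable_and_hasSum_of_abs_le_moment (hsol : IsSol k p q r α D x M)
    (ht : 0 ≤ t) (hD : Icc 0 t ⊆ D) {f : ℕ → ℝ → ℝ} (hf : ∀ i, ContinuousOn (f i) (Icc 0 t)) (c : ℝ)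
    (hfc : ∀ s ∈ Icc 0 t, ∀ i, |f i s| ≤ c * (((i : ℝ) * p i + (i : ℝ) * q i + k i) * M i s)) :
    IntervalIntegrable (fun s => ∑' i, f i s) volume 0 t ∧
      HasSum (fun i => ∫ s in 0..t, f i s) (∫ s in 0..t, ∑' i, f i s) := by
  rw [← uIcc_of_le ht] at hD hf hfc
  have hg : ∀ s ∈ uIcc 0 t,
      HasSum (fun i : ℕ => c * (((i : ℝ) * p i + (i : ℝ) * q i + k i) * M i s))
        (c * ∑' i : ℕ, ((i : ℝ) * p i + (i : ℝ) * q i + k i) * M i s) :=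
    fun s hs => (hsol.summable_mom s (hD hs)).hasSum.mul_left c
  have hG := (hsol.mom_int t (hD right_mem_uIcc)).const_mul c
  exact ⟨intervalIntegrable_tsum_of_norm_le hf hfc hg hG,
    hasSum_intervalIntegral_of_norm_le hf hfc hg hG⟩

theorem IsSol.integrable_and_hasSum_uptake (hsol : IsSol k p q r α D x M) (hk : ∀ i, 0 ≤ k i)
    (hp : ∀ i, 0 ≤ p i) (hq : ∀ i, 0 ≤ q i) (ht : 0 ≤ t) (hD : Icc 0 t ⊆ D) :
    IntervalIntegrable (fun s => ∑' i, k i * x s * M i s) volume 0 t ∧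
      HasSum (fun i => ∫ s in 0..t, k i * x s * M i s)
        (∫ s in 0..t, ∑' i, k i * x s * M i s) := by
  obtain ⟨C, hC⟩ := hsol.exists_bound_x hD
  refine hsol.integrable_and_hasSum_of_abs_le_moment ht hD (hsol.continuousOn_uptake hD) C
    fun s hs i => ?_
  have hx := hsol.x_nonneg s (hD hs)
  have hM := hsol.M_nonneg i s (hD hs)
  have hxC := hC s hs
  have hip : 0 ≤ (i : ℝ) * p i + (i : ℝ) * q i := by have := hp i; have := hq i; positivity
  rw [abs_of_nonneg (by have := hk i; positivity)]
  nlinarith [mul_nonneg (mul_nonneg (hk i) (sub_nonneg.2 hxC)) hM,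
    mul_nonneg (mul_nonneg (hx.trans hxC) hip) hM]

theorem IsSol.integrable_and_hasSum_weighted (hsol : IsSol k p q r α D x M) (ht : 0 ≤ t)
    (hD : Icc 0 t ⊆ D) {w : ℕ → ℝ} (hw0 : ∀ i, 0 ≤ w i)
    (hw : ∀ i, w i ≤ (i : ℝ) * p i + (i : ℝ) * q i + k i) :
    IntervalIntegrable (fun s => ∑' i : ℕ, w i * M i s) volume 0 t ∧
      HasSum (fun i => ∫ s in 0..t, w i * M i s) (∫ s in 0..t, ∑' i : ℕ, w i * M i s) := by
  refine hsol.integrable_and_hasSum_of_abs_le_moment ht hD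
    (fun i => hsol.continuousOn_const_mul_M hD (w i) i) 1 fun s hs i => ?_
  have hM := hsol.M_nonneg i s (hD hs)
  rw [abs_of_nonneg (mul_nonneg (hw0 i) hM), one_mul]
  exact mul_le_mul_of_nonneg_right (hw i) hM

theorem IsSol.integrable_and_hasSum_release (hsol : IsSol k p q r α D x M) (hk : ∀ i, 0 ≤ k i)
    (hp : ∀ i, 0 ≤ p i) (hq : ∀ i, 0 ≤ q i) (ht : 0 ≤ t) (hD : Icc 0 t ⊆ D) :
    IntervalIntegrable (fun s => ∑' i : ℕ, (i : ℝ) * q i * M i s) volume 0 t ∧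
      HasSum (fun i : ℕ => ∫ s in 0..t, (i : ℝ) * q i * M i s)
        (∫ s in 0..t, ∑' i : ℕ, (i : ℝ) * q i * M i s) :=
  hsol.integrable_and_hasSum_weighted ht hD (fun i => by have := hq i; positivity)
    (fun i => by have := hk i; have := mul_nonneg i.cast_nonneg (hp i); linarith)

theorem IsSol.hasSum_clearance (hsol : IsSol k p q r α D x M) (hk : ∀ i, 0 ≤ k i)
    (hp : ∀ i, 0 ≤ p i) (hq : ∀ i, 0 ≤ q i) (ht : 0 ≤ t) (hD : Icc 0 t ⊆ D) :
    HasSum (fun i : ℕ => ∫ s in 0..t, (i : ℝ) * p i * M i s)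
      (∫ s in 0..t, ∑' i : ℕ, (i : ℝ) * p i * M i s) :=
  (hsol.integrable_and_hasSum_weighted ht hD (fun i => by have := hp i; positivity)
    (fun i => by have := hk i; have := mul_nonneg i.cast_nonneg (hq i); linarith)).2

theorem IsSol.hasSum_removal (hsol : IsSol k p q r α D x M) (hk : ∀ i, 0 ≤ k i)
    (hp : ∀ i, 0 ≤ p i) (hq : ∀ i, 0 ≤ q i) (ht : 0 ≤ t) (hD : Icc 0 t ⊆ D) :
    HasSum (fun i => ∫ s in 0..t, (p i + q i) * M i s)
      (∫ s in 0..t, ∑' i : ℕ, (p i + q i) * M i s) := by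
  have hf := fun i => hsol.continuousOn_const_mul_M hD (p i + q i) i
  rw [← uIcc_of_le ht] at hD hf
  -- for `i ≥ 1` the weight `i` dominates `1`; only the term `i = 0` escapes the moment bound
  refine hasSum_intervalIntegral_of_norm_le hf (g := fun i s =>
      ((i : ℝ) * p i + (i : ℝ) * q i + k i) * M i s + if i = 0 then (p 0 + q 0) * M 0 s else 0)
    (fun s hs i => ?_)
    (fun s hs => (hsol.summable_mom s (hD hs)).hasSum.add (hasSum_ite_eq 0 _))
    ((hsol.mom_int t (hD right_mem_uIcc)).add (hf 0).intervalIntegrable)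
  have hM := hsol.M_nonneg i s (hD hs)
  have := hk i; have := hp i; have := hq i
  rw [Real.norm_eq_abs, abs_of_nonneg (by positivity)]
  rcases i with _ | i
  · simp only [Nat.cast_zero, zero_mul, zero_add, if_true]
    nlinarith
  · have hi : (1 : ℝ) ≤ ((i + 1 : ℕ) : ℝ) := by exact_mod_cast Nat.le_add_left 1 i
    simp only [Nat.add_one_ne_zero, if_false, add_zero]
    exact mul_le_mul_of_nonneg_right (by nlinarith) hM

theorem IsSol.x_sub_x_zero (hsol : IsSol k p q r α D x M) (hk : ∀ i, 0 ≤ k i)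
    (hp : ∀ i, 0 ≤ p i) (hq : ∀ i, 0 ≤ q i) (ht : 0 ≤ t) (hD : Icc 0 t ⊆ D) :
    x t - x 0 = α * t + (∫ s in 0..t, ∑' i : ℕ, (i : ℝ) * q i * M i s)
      - ∫ s in 0..t, ∑' i : ℕ, k i * x s * M i s := by
  have hB := (hsol.integrable_and_hasSum_uptake hk hp hq ht hD).1
  have hQ := (hsol.integrable_and_hasSum_release hk hp hq ht hD).1
  have hpull : ∀ s, x s * ∑' i : ℕ, k i * M i s = ∑' i : ℕ, k i * x s * M i s := fun s => by
    rw [← tsum_mul_left]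
    exact tsum_congr fun i => by ring
  have h := hsol.eq_x t (hD ⟨ht, le_rfl⟩)
  simp only [hpull] at h
  rw [intervalIntegral.integral_add (f := fun s => -∑' i : ℕ, k i * x s * M i s) hB.neg hQ,
    intervalIntegral.integral_neg] at h
  linarith

theorem IsSol.M_zero_sub (hsol : IsSol k p q r α D x M) (ht : 0 ≤ t) (hD : Icc 0 t ⊆ D) :
    M 0 t - M 0 0
      = r * t - (∫ s in 0..t, k 0 * x s * M 0 s) - ∫ s in 0..t, (p 0 + q 0) * M 0 s := by
  have h := hsol.eq_M0 t (hD ⟨ht, le_rfl⟩)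
  rw [intervalIntegral.integral_add ((hsol.continuousOn_uptake hD 0).intervalIntegrable_of_Icc ht)
    ((hsol.continuousOn_const_mul_M hD _ 0).intervalIntegrable_of_Icc ht)] at h
  linarith

theorem IsSol.M_succ_sub (hsol : IsSol k p q r α D x M) (ht : 0 ≤ t) (hD : Icc 0 t ⊆ D)
    (j : ℕ) :
    M (j + 1) t - M (j + 1) 0 = (∫ s in 0..t, k j * x s * M j s)
      - (∫ s in 0..t, k (j + 1) * x s * M (j + 1) s)
      - ∫ s in 0..t, (p (j + 1) + q (j + 1)) * M (j + 1) s := by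
  have h := hsol.eq_M (j + 1) (Nat.le_add_left 1 j) t (hD ⟨ht, le_rfl⟩)
  have hup : ∀ i, IntervalIntegrable (fun s => k i * x s * M i s) volume 0 t :=
    fun i => (hsol.continuousOn_uptake hD i).intervalIntegrable_of_Icc ht
  simp only [Nat.add_sub_cancel] at h
  rw [intervalIntegral.integral_sub ((hup j).sub (hup (j + 1)))
      ((hsol.continuousOn_const_mul_M hD _ (j + 1)).intervalIntegrable_of_Icc ht),
    intervalIntegral.integral_sub (hup j) (hup (j + 1))] at h
  linarith

theorem IsSol.tsum_succ_mul_M_sub (hsol : IsSol k p q r α D x M) (hk : ∀ i, 0 ≤ k i)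
    (hp : ∀ i, 0 ≤ p i) (hq : ∀ i, 0 ≤ q i) (ht : 0 ≤ t) (hD : Icc 0 t ⊆ D) :
    ∑' i : ℕ, ((i : ℝ) + 1) * M i t - ∑' i : ℕ, ((i : ℝ) + 1) * M i 0
      = r * t + (∫ s in 0..t, ∑' i : ℕ, k i * x s * M i s)
        - ((∫ s in 0..t, ∑' i : ℕ, (p i + q i) * M i s)
          + ((∫ s in 0..t, ∑' i : ℕ, (i : ℝ) * p i * M i s)
            + ∫ s in 0..t, ∑' i : ℕ, (i : ℝ) * q i * M i s)) := by
  have hmass : HasSum (fun i : ℕ => ((i : ℝ) + 1) * (M i t - M i 0))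
      (∑' i : ℕ, ((i : ℝ) + 1) * M i t - ∑' i : ℕ, ((i : ℝ) + 1) * M i 0) := by
    simpa only [mul_sub] using (hsol.summable_norm t (hD ⟨ht, le_rfl⟩)).hasSum.sub
      (hsol.summable_norm 0 (hD ⟨le_rfl, ht⟩)).hasSum
  have hloss : HasSum (fun i : ℕ => ((i : ℝ) + 1) * ∫ s in 0..t, (p i + q i) * M i s)
      ((∫ s in 0..t, ∑' i : ℕ, (p i + q i) * M i s)
        + ((∫ s in 0..t, ∑' i : ℕ, (i : ℝ) * p i * M i s)
          + ∫ s in 0..t, ∑' i : ℕ, (i : ℝ) * q i * M i s)) := by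
    convert (hsol.hasSum_removal hk hp hq ht hD).add ((hsol.hasSum_clearance hk hp hq ht hD).add
      (hsol.integrable_and_hasSum_release hk hp hq ht hD).2) using 1
    funext i
    simp only [intervalIntegral.integral_const_mul]
    ring
  exact eq_of_chain_of_hasSum (hsol.M_zero_sub ht hD) (hsol.M_succ_sub ht hD) hmass
    (hsol.integrable_and_hasSum_uptake hk hp hq ht hD).2 hloss

end Solution

theorem silicosis_mass_balance_general
    (k p q : ℕ → ℝ)
    (hk : ∀ i, 0 ≤ k i) (hp : ∀ i, 0 ≤ p i) (hq : ∀ i, 0 ≤ q i)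
    (r α : ℝ)
    (T : ℝ) (x : ℝ → ℝ) (M : ℕ → ℝ → ℝ)
    (hsol : IsSol k p q r α (Set.Ico 0 T) x M) :
    ∀ t ∈ Set.Ico (0:ℝ) T,
      Utot x M t - Utot x M 0
        = (r + α) * t - (∫ s in (0:ℝ)..t, ∑' i : ℕ, (p i + q i) * M i s)
          - ∫ s in (0:ℝ)..t, ∑' i : ℕ, (i : ℝ) * p i * M i s := by
  intro t ht
  have hD : Icc 0 t ⊆ Ico 0 T := Icc_subset_Ico_right ht.2
  have hx := hsol.x_sub_x_zero hk hp hq ht.1 hD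
  have hM := hsol.tsum_succ_mul_M_sub hk hp hq ht.1 hD
  simp only [Utot]
  linarith

/-- the mass balance identity (5.5): for every solution on `[0,T)` and
every `t ∈ [0,T)`,
`𝒰(y(t)) − 𝒰(y(0)) = (r+α)t − ∫₀ᵗ ∑_{i≥0}(pᵢ+qᵢ)Mᵢ − ∫₀ᵗ ∑_{i≥1} i pᵢ Mᵢ`. -/
theorem silicosis_mass_balance
    (k p q : ℕ → ℝ)
    (hk : ∀ i, 0 ≤ k i) (hp : ∀ i, 0 ≤ p i) (hq : ∀ i, 0 ≤ q i)
    (r α : ℝ) (hr : 0 ≤ r) (hα : 0 ≤ α)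
    (T : ℝ) (x : ℝ → ℝ) (M : ℕ → ℝ → ℝ)
    (hsol : IsSol k p q r α (Set.Ico 0 T) x M) :
    ∀ t ∈ Set.Ico (0:ℝ) T,
      Utot x M t - Utot x M 0
        = (r + α) * t - (∫ s in (0:ℝ)..t, ∑' i : ℕ, (p i + q i) * M i s)
          - ∫ s in (0:ℝ)..t, ∑' i : ℕ, (i : ℝ) * p i * M i s :=
  silicosis_mass_balance_general k p q hk hp hq r α T x M hsol
end
end

section
/- Every solution y of the silicosis system on [0,T) satisfies, for each m ≥ 1 and t ∈ [0,T): Σ_{i≥m} M_i(t) − Σ_{i≥m} M_i(0) + ∫_0^t Σ_{i≥m}(p_i+q_i)M_i(s) ds = ∫_0^t x(s) k_{m−1} M_{m−1}(s) ds. -/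
open MeasureTheory Set Filter

noncomputable section

/-!
Summed over `i ≥ m`, the integrated equations for `Mᵢ` telescope. Every series involved is
dominated by a tail of the moment `∑ (i pᵢ + i qᵢ + kᵢ) Mᵢ`, which is integrable in time, so
sums and integrals commute by dominated convergence. In particular the coagulation fluxes
`∫ x kᵢ Mᵢ` form a convergent series, hence tend to zero, and only the first one,
`∫ x k_{m-1} M_{m-1}`, survives the telescoping.
-/

theorem Summable.hasSum_sub_succ {G : Type*} [AddCommGroup G] [TopologicalSpace G]
    [IsTopologicalAddGroup G] [T2Space G] {f : ℕ → G} (hf : Summable f) :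
    HasSum (fun n => f n - f (n + 1)) (f 0) := by
  have hsucc : HasSum (fun n => f (n + 1)) (∑' n, f (n + 1)) :=
    ((summable_nat_add_iff 1).2 hf).hasSum
  simpa [hf.tsum_eq_zero_add] using hf.hasSum.sub hsucc

def momentWeight (k p q : ℕ → ℝ) (i : ℕ) : ℝ :=
  (i : ℝ) * p i + (i : ℝ) * q i + k i

section momentWeight

variable {k p q : ℕ → ℝ} {i : ℕ}

lemma k_le_momentWeight (hp : 0 ≤ p i) (hq : 0 ≤ q i) : k i ≤ momentWeight k p q i := by
  unfold momentWeight
  have : (0 : ℝ) ≤ i := i.cast_nonneg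
  nlinarith

lemma add_le_momentWeight (hk : 0 ≤ k i) (hp : 0 ≤ p i) (hq : 0 ≤ q i) (hi : 1 ≤ i) :
    p i + q i ≤ momentWeight k p q i := by
  unfold momentWeight
  have : (1 : ℝ) ≤ i := by exact_mod_cast hi
  nlinarith

end momentWeight

namespace IsSol

variable {k p q : ℕ → ℝ} {r α : ℝ} {D : Set ℝ} {x : ℝ → ℝ} {M : ℕ → ℝ → ℝ} {t : ℝ}

lemma summable_M (hsol : IsSol k p q r α D x M) (ht : t ∈ D) : Summable (fun i => M i t) :=
  (hsol.summable_norm t ht).of_nonneg_of_le (fun i => hsol.M_nonneg i t ht) fun i => by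
    have := hsol.M_nonneg i t ht
    have : (0 : ℝ) ≤ i := i.cast_nonneg
    nlinarith

lemma exists_x_le (hsol : IsSol k p q r α D x M) (hsub : Icc 0 t ⊆ D) :
    ∃ C, ∀ s ∈ Icc 0 t, x s ≤ C := by
  obtain ⟨C, hC⟩ := hsol.norm_bdd t hsub
  refine ⟨C, fun s hs => ?_⟩
  have : 0 ≤ ∑' i : ℕ, ((i : ℝ) + 1) * M i s :=
    tsum_nonneg fun i => mul_nonneg (by positivity) (hsol.M_nonneg i s (hsub hs))
  linarith [hC s hs]

lemma intervalIntegrable_tsum_moment_tail (hsol : IsSol k p q r α D x M)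
    (hsub : uIcc 0 t ⊆ D) (n : ℕ) :
    IntervalIntegrable (fun s => ∑' j, momentWeight k p q (n + j) * M (n + j) s) volume 0 t := by
  have hsplit : ∀ s ∈ D, ∑' j, momentWeight k p q (n + j) * M (n + j) s
      = (∑' i, momentWeight k p q i * M i s)
        - ∑ i ∈ Finset.range n, momentWeight k p q i * M i s := fun s hs => by
    have hmom : Summable fun i => momentWeight k p q i * M i s := hsol.summable_mom s hs
    rw [← hmom.sum_add_tsum_nat_add n]
    simp only [add_comm _ n, add_sub_cancel_left]
  have hfinite : IntervalIntegrable
      (fun s => ∑ i ∈ Finset.range n, momentWeight k p q i * M i s) volume 0 t :=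
    ContinuousOn.intervalIntegrable <| continuousOn_finsetSum _ fun i _ =>
      continuousOn_const.mul ((hsol.M_cont i).mono hsub)
  exact ((hsol.mom_int t (hsub right_mem_uIcc)).sub hfinite).congr fun s hs =>
    (hsplit s (hsub (uIoc_subset_uIcc hs))).symm

lemma hasSum_intervalIntegral_of_norm_le_moment (hsol : IsSol k p q r α D x M)
    (hsub : uIcc 0 t ⊆ D) (n : ℕ) (C : ℝ) {F : ℕ → ℝ → ℝ}
    (hF : ∀ j, ContinuousOn (F j) (uIcc 0 t))
    (hFle : ∀ j, ∀ s ∈ uIcc 0 t, ‖F j s‖ ≤ C * (momentWeight k p q (n + j) * M (n + j) s)) :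
    HasSum (fun j => ∫ s in (0:ℝ)..t, F j s) (∫ s in (0:ℝ)..t, ∑' j, F j s) := by
  have hbound : ∀ s ∈ uIcc 0 t,
      Summable fun j => C * (momentWeight k p q (n + j) * M (n + j) s) := fun s hs =>
    ((hsol.summable_mom s (hsub hs)).comp_injective (add_right_injective n)).mul_left C
  refine intervalIntegral.hasSum_integral_of_dominated_convergence
    (fun j s => C * (momentWeight k p q (n + j) * M (n + j) s))
    (fun j => ((hF j).mono uIoc_subset_uIcc).aestronglyMeasurable measurableSet_uIoc)
    (fun j => ae_of_all _ fun s hs => hFle j s (uIoc_subset_uIcc hs))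
    (ae_of_all _ fun s hs => hbound s (uIoc_subset_uIcc hs)) ?_
    (ae_of_all _ fun s hs => (Summable.of_norm_bounded (hbound s (uIoc_subset_uIcc hs))
      (hFle · s (uIoc_subset_uIcc hs))).hasSum)
  simp only [tsum_mul_left]
  exact (hsol.intervalIntegrable_tsum_moment_tail hsub n).const_mul C

lemma norm_removal_le (hsol : IsSol k p q r α D x M) (hk : ∀ i, 0 ≤ k i) (hp : ∀ i, 0 ≤ p i)
    (hq : ∀ i, 0 ≤ q i) {i : ℕ} (hi : 1 ≤ i) {s : ℝ} (hs : s ∈ D) :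
    ‖(p i + q i) * M i s‖ ≤ momentWeight k p q i * M i s := by
  have hM := hsol.M_nonneg i s hs
  rw [Real.norm_of_nonneg (mul_nonneg (add_nonneg (hp i) (hq i)) hM)]
  exact mul_le_mul_of_nonneg_right (add_le_momentWeight (hk i) (hp i) (hq i) hi) hM

lemma norm_coagulation_le (hsol : IsSol k p q r α D x M) (hk : ∀ i, 0 ≤ k i)
    (hp : ∀ i, 0 ≤ p i) (hq : ∀ i, 0 ≤ q i) (i : ℕ) {s C : ℝ} (hs : s ∈ D) (hxC : x s ≤ C) :
    ‖x s * k i * M i s‖ ≤ C * (momentWeight k p q i * M i s) := by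
  have hx := hsol.x_nonneg s hs
  have hM := hsol.M_nonneg i s hs
  have := hk i
  have hkM : k i * M i s ≤ momentWeight k p q i * M i s :=
    mul_le_mul_of_nonneg_right (k_le_momentWeight (hp i) (hq i)) hM
  rw [Real.norm_of_nonneg (by positivity), mul_assoc]
  exact mul_le_mul hxC hkM (mul_nonneg (hk i) hM) (hx.trans hxC)

lemma sub_add_integral_removal_eq (hsol : IsSol k p q r α D x M) {i : ℕ} (hi : 1 ≤ i)
    (hsub : uIcc 0 t ⊆ D) :
    M i t - M i 0 + ∫ s in (0:ℝ)..t, (p i + q i) * M i s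
      = (∫ s in (0:ℝ)..t, x s * k (i - 1) * M (i - 1) s) - ∫ s in (0:ℝ)..t, x s * k i * M i s := by
  have hcont : ∀ j, IntervalIntegrable (fun s => x s * k j * M j s) volume 0 t := fun j =>
    ContinuousOn.intervalIntegrable
      (((hsol.x_cont.mono hsub).mul continuousOn_const).mul ((hsol.M_cont j).mono hsub))
  have hremoval : IntervalIntegrable (fun s => (p i + q i) * M i s) volume 0 t :=
    (continuousOn_const.mul ((hsol.M_cont i).mono hsub)).intervalIntegrable
  have heq := hsol.eq_M i hi t (hsub right_mem_uIcc)
  have hintegrand :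
      (fun s => k (i - 1) * x s * M (i - 1) s - k i * x s * M i s - (p i + q i) * M i s)
      = fun s => x s * k (i - 1) * M (i - 1) s - x s * k i * M i s - (p i + q i) * M i s := by
    funext s; ring
  rw [hintegrand] at heq
  rw [intervalIntegral.integral_sub ((hcont _).sub (hcont _)) hremoval,
    intervalIntegral.integral_sub (hcont _) (hcont _)] at heq
  linarith

end IsSol

theorem silicosis_tail_identity_general
    (k p q : ℕ → ℝ)
    (hk : ∀ i, 0 ≤ k i) (hp : ∀ i, 0 ≤ p i) (hq : ∀ i, 0 ≤ q i)
    (r α : ℝ)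
    (T : ℝ) (x : ℝ → ℝ) (M : ℕ → ℝ → ℝ)
    (hsol : IsSol k p q r α (Set.Ico 0 T) x M) :
    ∀ m : ℕ, 1 ≤ m → ∀ t ∈ Set.Ico (0:ℝ) T,
      (∑' i : ℕ, M (m+i) t) - (∑' i : ℕ, M (m+i) 0)
        + (∫ s in (0:ℝ)..t, ∑' i : ℕ, (p (m+i) + q (m+i)) * M (m+i) s)
      = ∫ s in (0:ℝ)..t, x s * k (m-1) * M (m-1) s := by
  intro m hm t ⟨ht0, htT⟩
  have hIcc : Icc 0 t ⊆ Ico 0 T := fun s hs => ⟨hs.1, hs.2.trans_lt htT⟩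
  have hsub : uIcc 0 t ⊆ Ico 0 T := uIcc_of_le ht0 ▸ hIcc
  obtain ⟨C, hC⟩ := hsol.exists_x_le hIcc
  have hcoag := hsol.hasSum_intervalIntegral_of_norm_le_moment hsub (m - 1) C
    (F := fun j s => x s * k (m - 1 + j) * M (m - 1 + j) s)
    (fun j => ((hsol.x_cont.mono hsub).mul continuousOn_const).mul ((hsol.M_cont _).mono hsub))
    (fun j s hs => hsol.norm_coagulation_le hk hp hq _ (hsub hs) (hC s (uIcc_of_le ht0 ▸ hs)))
  have hremoval := hsol.hasSum_intervalIntegral_of_norm_le_moment hsub m 1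
    (F := fun j s => (p (m + j) + q (m + j)) * M (m + j) s)
    (fun j => continuousOn_const.mul ((hsol.M_cont _).mono hsub))
    (fun j s hs => by rw [one_mul]; exact hsol.norm_removal_le hk hp hq (by omega) (hsub hs))
  have htail : ∀ s ∈ Ico 0 T, HasSum (fun j => M (m + j) s) (∑' j, M (m + j) s) := fun s hs =>
    ((hsol.summable_M hs).comp_injective (add_right_injective m)).hasSum
  have hsum := ((htail t ⟨ht0, htT⟩).sub (htail 0 ⟨le_rfl, ht0.trans_lt htT⟩)).add hremoval
  refine hsum.unique ?_
  convert hcoag.summable.hasSum_sub_succ using 2 with j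
  · rw [hsol.sub_add_integral_removal_eq (by omega) hsub, show m + j - 1 = m - 1 + j by omega,
      show m - 1 + (j + 1) = m + j by omega]
  · simp only [add_zero]

/-- the moment identity with constant weights `gᵢ = 1` (equation (5.6)):
for every solution on `[0,T)`, every `m ≥ 1` and `t ∈ [0,T)`,
`∑_{i≥m} Mᵢ(t) − ∑_{i≥m} Mᵢ(0) + ∫₀ᵗ ∑_{i≥m}(pᵢ+qᵢ)Mᵢ = ∫₀ᵗ x k_{m−1} M_{m−1}`. -/
theorem silicosis_tail_identity
    (k p q : ℕ → ℝ)
    (hk : ∀ i, 0 ≤ k i) (hp : ∀ i, 0 ≤ p i) (hq : ∀ i, 0 ≤ q i)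
    (r α : ℝ) (hr : 0 ≤ r) (hα : 0 ≤ α)
    (T : ℝ) (x : ℝ → ℝ) (M : ℕ → ℝ → ℝ)
    (hsol : IsSol k p q r α (Set.Ico 0 T) x M) :
    ∀ m : ℕ, 1 ≤ m → ∀ t ∈ Set.Ico (0:ℝ) T,
      (∑' i : ℕ, M (m+i) t) - (∑' i : ℕ, M (m+i) 0)
        + (∫ s in (0:ℝ)..t, ∑' i : ℕ, (p (m+i) + q (m+i)) * M (m+i) s)
      = ∫ s in (0:ℝ)..t, x s * k (m-1) * M (m-1) s :=
  silicosis_tail_identity_general k p q hk hp hq r α T x M hsol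
end
end

section
/- If y is a solution of the silicosis system on [0,T), then y : [0,T) → X is continuous in the norm of X, and the series Σ_{i≥1} i M_i(t) converges uniformly on compact subintervals of [0,T). -/
/-!
Integrating the equations for the `Mᵢ` and summing them with weights `i + 1`, the flux terms
`kᵢ x Mᵢ` telescope up to a boundary term `(N + 1) ∫₀ᵗ k_N x M_N`. All series in sight are
dominated by the integrable moment series `∑ (i pᵢ + i qᵢ + kᵢ) Mᵢ` plus a continuous term, so by
dominated convergence every other term of the identity converges as `N → ∞`. Hence the boundary
term converges too, and since `∑ₙ ∫₀ᵗ kₙ x Mₙ` converges, its limit is zero. With the equation for `x` this gives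
the balance law
`x(t) + ∑ (i+1) Mᵢ(t) = x(0) + ∑ (i+1) Mᵢ(0) + (r + α) t + ∫₀ᵗ ∑ i qᵢ Mᵢ - ∫₀ᵗ ∑ (i+1)(pᵢ+qᵢ) Mᵢ`,
whose right-hand side is continuous in `t`. So `∑ (i+1) Mᵢ` is continuous, Dini's theorem makes its
partial sums converge uniformly on compact intervals, and both claims follow by bounding the tails
of the series in question by tails of this one.
-/

open MeasureTheory Set Filter

noncomputable section

open Topology

theorem eq_zero_of_tendsto_succ_mul_of_summable {u : ℕ → ℝ} {L : ℝ} (hu : Summable u)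
    (hL : Tendsto (fun n : ℕ => ((n : ℝ) + 1) * u n) atTop (𝓝 L)) : L = 0 := by
  by_contra hL0
  have hlarge : ∀ᶠ n : ℕ in atTop, |L| / 2 < |((n : ℝ) + 1) * u n| :=
    hL.abs.eventually (lt_mem_nhds (half_lt_self (abs_pos.2 hL0)))
  refine Real.not_summable_one_div_natCast ((summable_nat_add_iff 1).1 ?_)
  refine (hu.abs.mul_left (2 / |L|)).of_norm_bounded_eventually_nat ?_
  filter_upwards [hlarge] with n hn
  have hn1 : (0 : ℝ) < n + 1 := by positivity
  rw [abs_mul, abs_of_pos hn1] at hn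
  rw [Nat.cast_add, Nat.cast_one, norm_div, norm_one, Real.norm_of_nonneg hn1.le,
    div_le_iff₀ hn1, div_mul_eq_mul_div, div_mul_eq_mul_div, le_div_iff₀ (abs_pos.2 hL0)]
  linarith

theorem sum_range_succ_mul_of_balance {m m' u v : ℕ → ℝ} {ρ : ℝ}
    (h0 : m' 0 = m 0 + ρ - u 0 - v 0)
    (hsucc : ∀ i, m' (i + 1) = m (i + 1) + u i - u (i + 1) - v (i + 1)) (N : ℕ) :
    ∑ i ∈ Finset.range (N + 1), ((i : ℝ) + 1) * m' i
      = ∑ i ∈ Finset.range (N + 1), ((i : ℝ) + 1) * m i + ρ + ∑ i ∈ Finset.range N, u i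
        - ((N : ℝ) + 1) * u N - ∑ i ∈ Finset.range (N + 1), ((i : ℝ) + 1) * v i := by
  induction N with
  | zero => simp [h0]
  | succ N ih =>
    rw [Finset.sum_range_succ _ (N + 1), ih, hsucc, Finset.sum_range_succ _ (N + 1),
      Finset.sum_range_succ u, Finset.sum_range_succ _ (N + 1)]
    push_cast
    ring

theorem weighted_sum_eq_of_balance {m m' u v : ℕ → ℝ} {ρ S S' U V : ℝ}
    (h0 : m' 0 = m 0 + ρ - u 0 - v 0)
    (hsucc : ∀ i, m' (i + 1) = m (i + 1) + u i - u (i + 1) - v (i + 1))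
    (hS : HasSum (fun i : ℕ => ((i : ℝ) + 1) * m i) S)
    (hS' : HasSum (fun i : ℕ => ((i : ℝ) + 1) * m' i) S')
    (hU : HasSum u U) (hV : HasSum (fun i : ℕ => ((i : ℝ) + 1) * v i) V) :
    S' = S + ρ + U - V := by
  have hlim := fun {f : ℕ → ℝ} {a : ℝ} (h : HasSum f a) =>
    h.tendsto_sum_nat.comp (tendsto_add_atTop_nat 1)
  have hflux : Tendsto (fun N : ℕ => ((N : ℝ) + 1) * u N) atTop (𝓝 (S + ρ + U - V - S')) := by
    refine ((((hlim hS).add_const ρ).add hU.tendsto_sum_nat).sub (hlim hV) |>.sub (hlim hS')).congr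
      fun N => ?_
    simp only [Function.comp_apply, sum_range_succ_mul_of_balance h0 hsucc N]
    ring
  linarith [eq_zero_of_tendsto_succ_mul_of_summable hU.summable hflux]

structure DominatedSeriesOn (f : ℕ → ℝ → ℝ) (a b : ℝ) : Prop where
  continuousOn : ∀ i, ContinuousOn (f i) (uIcc a b)
  exists_bound : ∃ g : ℕ → ℝ → ℝ, (∀ i, ∀ s ∈ uIcc a b, |f i s| ≤ g i s) ∧
    (∀ s ∈ uIcc a b, Summable (g · s)) ∧ IntervalIntegrable (fun s => ∑' i, g i s) volume a b

namespace DominatedSeriesOn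

variable {f : ℕ → ℝ → ℝ} {a b : ℝ}

theorem summable (hf : DominatedSeriesOn f a b) {s : ℝ} (hs : s ∈ uIcc a b) :
    Summable (f · s) :=
  have ⟨_, hfg, hg, _⟩ := hf.exists_bound
  .of_norm_bounded (hg s hs) fun i => hfg i s hs

theorem intervalIntegrable_tsum (hf : DominatedSeriesOn f a b) :
    IntervalIntegrable (fun s => ∑' i, f i s) volume a b := by
  obtain ⟨g, hfg, hg, hgi⟩ := hf.exists_bound
  rw [intervalIntegrable_iff] at hgi ⊢
  refine hgi.mono' ?_ ?_
  · refine aestronglyMeasurable_of_tendsto_ae atTop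
      (f := fun N s => ∑ i ∈ Finset.range N, f i s) (fun N => ?_) ?_
    · exact ((continuousOn_finsetSum _ fun i _ => hf.continuousOn i).mono uIoc_subset_uIcc
        ).aestronglyMeasurable measurableSet_uIoc
    · filter_upwards [ae_restrict_mem measurableSet_uIoc] with s hs
      exact (hf.summable (uIoc_subset_uIcc hs)).hasSum.tendsto_sum_nat
  · filter_upwards [ae_restrict_mem measurableSet_uIoc] with s hs
    have hs' := uIoc_subset_uIcc hs
    exact tsum_of_norm_bounded (hg s hs').hasSum fun i => hfg i s hs'

theorem hasSum_integral (hf : DominatedSeriesOn f a b) :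
    HasSum (fun i => ∫ s in a..b, f i s) (∫ s in a..b, ∑' i, f i s) := by
  obtain ⟨g, hfg, hg, hgi⟩ := hf.exists_bound
  exact intervalIntegral.hasSum_integral_of_dominated_convergence g
    (fun i => ((hf.continuousOn i).mono uIoc_subset_uIcc).aestronglyMeasurable measurableSet_uIoc)
    (fun i => ae_of_all _ fun s hs => hfg i s (uIoc_subset_uIcc hs))
    (ae_of_all _ fun s hs => hg s (uIoc_subset_uIcc hs)) hgi
    (ae_of_all _ fun s hs => (hf.summable (uIoc_subset_uIcc hs)).hasSum)

end DominatedSeriesOn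

theorem tendstoUniformlyOn_tsum_of_abs_le {α : Type*} {f g : ℕ → α → ℝ} {K : Set α}
    (hf : ∀ t ∈ K, Summable (f · t))
    (hfu : TendstoUniformlyOn (fun N t => ∑ i ∈ Finset.range N, f i t)
      (fun t => ∑' i, f i t) atTop K)
    (hgf : ∀ i, ∀ t ∈ K, |g i t| ≤ f i t) :
    TendstoUniformlyOn (fun N t => ∑ i ∈ Finset.range N, g i t)
      (fun t => ∑' i, g i t) atTop K := by
  rw [Metric.tendstoUniformlyOn_iff] at hfu ⊢
  intro ε hε
  filter_upwards [hfu ε hε] with N hN t ht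
  have hg : Summable (g · t) := Summable.of_norm_bounded (hf t ht) fun i => hgf i t ht
  have tail_le : |∑' i, g (i + N) t| ≤ ∑' i, f (i + N) t := by
    rw [← Real.norm_eq_abs]
    exact tsum_of_norm_bounded ((summable_nat_add_iff N).2 (hf t ht)).hasSum fun i => hgf _ t ht
  have hfN := hN t ht
  rw [Real.dist_eq, ← (hf t ht).sum_add_tsum_nat_add N, add_sub_cancel_left] at hfN
  rw [Real.dist_eq, ← hg.sum_add_tsum_nat_add N, add_sub_cancel_left]
  exact tail_le.trans_lt ((le_abs_self _).trans_lt hfN)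

theorem continuousOn_Ico_of_forall_continuousOn_Icc {f : ℝ → ℝ} {a b : ℝ}
    (h : ∀ c ∈ Ico a b, ContinuousOn f (Icc a c)) : ContinuousOn f (Ico a b) := by
  intro t ht
  have hc : (t + b) / 2 ∈ Ico a b := ⟨by linarith [ht.1, ht.2], by linarith [ht.2]⟩
  refine (h _ hc t ⟨ht.1, by linarith [ht.2]⟩).mono_of_mem_nhdsWithin ?_
  exact mem_of_superset (inter_mem_nhdsWithin _ (Iic_mem_nhds (by linarith [ht.2])))
    fun s hs => ⟨hs.1.1, hs.2⟩

theorem continuousOn_tsum_abs_sub {α : Type*} [TopologicalSpace α] {f : ℕ → α → ℝ} {K : Set α}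
    {t₀ : α} (hf : ∀ i, ContinuousOn (f i) K) (hf0 : ∀ i, ∀ t ∈ K, 0 ≤ f i t)
    (hsum : ∀ t ∈ K, Summable (f · t))
    (hfu : TendstoUniformlyOn (fun N t => ∑ i ∈ Finset.range N, f i t)
      (fun t => ∑' i, f i t) atTop K)
    (hf0' : ∀ i, 0 ≤ f i t₀) (hsum₀ : Summable (f · t₀)) :
    ContinuousOn (fun t => ∑' i, |f i t - f i t₀|) K := by
  have hfu' : TendstoUniformlyOn (fun N t => ∑ i ∈ Finset.range N, (f i t + f i t₀))
      (fun t => ∑' i, (f i t + f i t₀)) atTop K := by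
    refine ((hfu.add (hsum₀.hasSum.tendsto_sum_nat.tendstoUniformlyOn_const K)).congr
      (Eventually.of_forall fun N t _ => Finset.sum_add_distrib.symm)).congr_right
      fun t ht => ((hsum t ht).tsum_add hsum₀).symm
  refine (tendstoUniformlyOn_tsum_of_abs_le (fun t ht => (hsum t ht).add hsum₀) hfu'
    fun i t ht => ?_).continuousOn (Frequently.of_forall fun N => ?_)
  · rw [abs_abs, abs_sub_le_iff]
    constructor <;> linarith [hf0 i t ht, hf0' i]
  · exact continuousOn_finsetSum _ fun i _ => ((hf i).sub continuousOn_const).abs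

theorem tsum_mul_mul_left (c : ℝ) (a b : ℕ → ℝ) : ∑' i, a i * c * b i = c * ∑' i, a i * b i := by
  rw [← tsum_mul_left]
  exact tsum_congr fun i => by ring

namespace IsSol

variable {k p q : ℕ → ℝ} {r α : ℝ} {D : Set ℝ} {x : ℝ → ℝ} {M : ℕ → ℝ → ℝ} {s t : ℝ}

theorem kM_le_moment (hsol : IsSol k p q r α D x M) (hp : ∀ i, 0 ≤ p i) (hq : ∀ i, 0 ≤ q i)
    (hs : s ∈ D) (i : ℕ) : k i * M i s ≤ ((i : ℝ) * p i + (i : ℝ) * q i + k i) * M i s := by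
  have : 0 ≤ ((i : ℝ) * p i + (i : ℝ) * q i) * M i s :=
    mul_nonneg (add_nonneg (mul_nonneg i.cast_nonneg (hp i)) (mul_nonneg i.cast_nonneg (hq i)))
      (hsol.M_nonneg i s hs)
  linarith

theorem iqM_le_moment (hsol : IsSol k p q r α D x M) (hk : ∀ i, 0 ≤ k i) (hp : ∀ i, 0 ≤ p i)
    (hs : s ∈ D) (i : ℕ) :
    (i : ℝ) * q i * M i s ≤ ((i : ℝ) * p i + (i : ℝ) * q i + k i) * M i s := by
  have : 0 ≤ ((i : ℝ) * p i + k i) * M i s :=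
    mul_nonneg (add_nonneg (mul_nonneg i.cast_nonneg (hp i)) (hk i)) (hsol.M_nonneg i s hs)
  linarith

-- `k₀` does not control `p₀ + q₀`, so the term `i = 0` gets a bound of its own.
theorem succ_mul_pqM_le (hsol : IsSol k p q r α D x M) (hk : ∀ i, 0 ≤ k i)
    (hp : ∀ i, 0 ≤ p i) (hq : ∀ i, 0 ≤ q i) (hs : s ∈ D) (i : ℕ) :
    ((i : ℝ) + 1) * ((p i + q i) * M i s)
      ≤ 2 * (((i : ℝ) * p i + (i : ℝ) * q i + k i) * M i s)
        + if i = 0 then (p 0 + q 0) * M 0 s else 0 := by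
  have hM := hsol.M_nonneg i s hs
  rcases i with _ | i
  · simp only [Nat.cast_zero, if_true]
    nlinarith [mul_nonneg (hk 0) hM]
  · simp only [Nat.succ_ne_zero, if_false, add_zero]
    have : 0 ≤ ((i : ℝ) * (p (i + 1) + q (i + 1)) + 2 * k (i + 1)) * M (i + 1) s :=
      mul_nonneg (add_nonneg (mul_nonneg i.cast_nonneg (add_nonneg (hp _) (hq _)))
        (mul_nonneg zero_le_two (hk _))) hM
    push_cast
    linarith

theorem dominatedSeriesOn_kxM (hsol : IsSol k p q r α D x M) (hk : ∀ i, 0 ≤ k i)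
    (hp : ∀ i, 0 ≤ p i) (hq : ∀ i, 0 ≤ q i) (ht : uIcc 0 t ⊆ D) :
    DominatedSeriesOn (fun i s => k i * x s * M i s) 0 t := by
  have hx := hsol.x_cont.mono ht
  obtain ⟨C, hC⟩ := isCompact_uIcc.exists_bound_of_continuousOn hx
  refine ⟨fun i => (continuousOn_const.mul hx).mul ((hsol.M_cont i).mono ht),
    fun i s => C * (((i : ℝ) * p i + (i : ℝ) * q i + k i) * M i s), fun i s hs => ?_,
    fun s hs => (hsol.summable_mom s (ht hs)).mul_left C, ?_⟩
  · have hkM0 : 0 ≤ k i * M i s := mul_nonneg (hk i) (hsol.M_nonneg i s (ht hs))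
    calc |k i * x s * M i s| = ‖x s‖ * (k i * M i s) := by
          rw [Real.norm_eq_abs, ← abs_of_nonneg hkM0, ← abs_mul]; ring_nf
      _ ≤ C * (((i : ℝ) * p i + (i : ℝ) * q i + k i) * M i s) :=
          mul_le_mul (hC s hs) (hsol.kM_le_moment hp hq (ht hs) i) hkM0
            ((norm_nonneg _).trans (hC s hs))
  · simp_rw [tsum_mul_left]
    exact (hsol.mom_int t (ht right_mem_uIcc)).const_mul C

theorem dominatedSeriesOn_iqM (hsol : IsSol k p q r α D x M) (hk : ∀ i, 0 ≤ k i)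
    (hp : ∀ i, 0 ≤ p i) (hq : ∀ i, 0 ≤ q i) (ht : uIcc 0 t ⊆ D) :
    DominatedSeriesOn (fun i s => (i : ℝ) * q i * M i s) 0 t := by
  refine ⟨fun i => continuousOn_const.mul ((hsol.M_cont i).mono ht),
    fun i s => ((i : ℝ) * p i + (i : ℝ) * q i + k i) * M i s, fun i s hs => ?_,
    fun s hs => hsol.summable_mom s (ht hs), hsol.mom_int t (ht right_mem_uIcc)⟩
  rw [abs_of_nonneg (mul_nonneg (mul_nonneg i.cast_nonneg (hq i)) (hsol.M_nonneg i s (ht hs)))]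
  exact hsol.iqM_le_moment hk hp (ht hs) i

theorem dominatedSeriesOn_pqM (hsol : IsSol k p q r α D x M) (hk : ∀ i, 0 ≤ k i)
    (hp : ∀ i, 0 ≤ p i) (hq : ∀ i, 0 ≤ q i) (ht : uIcc 0 t ⊆ D) :
    DominatedSeriesOn (fun i s => ((i : ℝ) + 1) * ((p i + q i) * M i s)) 0 t := by
  refine ⟨fun i => continuousOn_const.mul (continuousOn_const.mul ((hsol.M_cont i).mono ht)),
    fun i s => 2 * (((i : ℝ) * p i + (i : ℝ) * q i + k i) * M i s)
      + if i = 0 then (p 0 + q 0) * M 0 s else 0, fun i s hs => ?_,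
    fun s hs => ((hsol.summable_mom s (ht hs)).mul_left 2).add (hasSum_ite_eq 0 _).summable, ?_⟩
  · rw [abs_of_nonneg (mul_nonneg (by positivity)
      (mul_nonneg (add_nonneg (hp i) (hq i)) (hsol.M_nonneg i s (ht hs))))]
    exact hsol.succ_mul_pqM_le hk hp hq (ht hs) i
  · refine (((hsol.mom_int t (ht right_mem_uIcc)).const_mul 2).add
      (((hsol.M_cont 0).mono ht).intervalIntegrable.const_mul (p 0 + q 0))).congr ?_
    intro s hs
    dsimp only
    rw [((hsol.summable_mom s (ht (uIoc_subset_uIcc hs))).mul_left 2).tsum_add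
      (hasSum_ite_eq 0 _).summable, tsum_mul_left, tsum_ite_eq]

theorem weighted_tsum_eq (hsol : IsSol k p q r α D x M) (hk : ∀ i, 0 ≤ k i)
    (hp : ∀ i, 0 ≤ p i) (hq : ∀ i, 0 ≤ q i) (ht : uIcc 0 t ⊆ D) :
    ∑' i : ℕ, ((i : ℝ) + 1) * M i t
      = ∑' i : ℕ, ((i : ℝ) + 1) * M i 0 + r * t + (∫ s in (0:ℝ)..t, x s * ∑' i, k i * M i s)
        - ∫ s in (0:ℝ)..t, ∑' i : ℕ, ((i : ℝ) + 1) * ((p i + q i) * M i s) := by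
  have hM i : IntervalIntegrable (M i) volume 0 t := ((hsol.M_cont i).mono ht).intervalIntegrable
  have hxM i : IntervalIntegrable (fun s => k i * x s * M i s) volume 0 t :=
    ((continuousOn_const.mul (hsol.x_cont.mono ht)).mul
      ((hsol.M_cont i).mono ht)).intervalIntegrable
  refine weighted_sum_eq_of_balance (m := (M · 0)) (m' := (M · t)) (ρ := r * t)
    (u := fun i => ∫ s in (0:ℝ)..t, k i * x s * M i s)
    (v := fun i => ∫ s in (0:ℝ)..t, (p i + q i) * M i s) ?_ (fun i => ?_)
    (hsol.summable_norm 0 (ht left_mem_uIcc)).hasSum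
    (hsol.summable_norm t (ht right_mem_uIcc)).hasSum ?_ ?_
  · rw [hsol.eq_M0 t (ht right_mem_uIcc),
      intervalIntegral.integral_add (hxM 0) ((hM 0).const_mul _)]
    ring
  · rw [hsol.eq_M (i + 1) (Nat.le_add_left 1 i) t (ht right_mem_uIcc), Nat.add_sub_cancel,
      intervalIntegral.integral_sub ((hxM i).sub (hxM (i + 1))) ((hM _).const_mul _),
      intervalIntegral.integral_sub (hxM i) (hxM (i + 1))]
    ring
  · simp_rw [← tsum_mul_mul_left]
    exact (hsol.dominatedSeriesOn_kxM hk hp hq ht).hasSum_integral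
  · simpa only [intervalIntegral.integral_const_mul] using
      (hsol.dominatedSeriesOn_pqM hk hp hq ht).hasSum_integral

theorem intervalIntegrable_x_mul_tsum_kM (hsol : IsSol k p q r α D x M) (hk : ∀ i, 0 ≤ k i)
    (hp : ∀ i, 0 ≤ p i) (hq : ∀ i, 0 ≤ q i) (ht : uIcc 0 t ⊆ D) :
    IntervalIntegrable (fun s => x s * ∑' i, k i * M i s) volume 0 t := by
  simp_rw [← tsum_mul_mul_left]
  exact (hsol.dominatedSeriesOn_kxM hk hp hq ht).intervalIntegrable_tsum

theorem add_weighted_tsum_eq (hsol : IsSol k p q r α D x M) (hk : ∀ i, 0 ≤ k i)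
    (hp : ∀ i, 0 ≤ p i) (hq : ∀ i, 0 ≤ q i) (ht : uIcc 0 t ⊆ D) :
    x t + ∑' i : ℕ, ((i : ℝ) + 1) * M i t
      = x 0 + ∑' i : ℕ, ((i : ℝ) + 1) * M i 0 + (r + α) * t
        + (∫ s in (0:ℝ)..t, ∑' i : ℕ, (i : ℝ) * q i * M i s)
        - ∫ s in (0:ℝ)..t, ∑' i : ℕ, ((i : ℝ) + 1) * ((p i + q i) * M i s) := by
  have hx := hsol.eq_x t (ht right_mem_uIcc)
  rw [intervalIntegral.integral_add (f := fun s => -(x s * ∑' i, k i * M i s))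
    (hsol.intervalIntegrable_x_mul_tsum_kM hk hp hq ht).neg
    (hsol.dominatedSeriesOn_iqM hk hp hq ht).intervalIntegrable_tsum,
    intervalIntegral.integral_neg] at hx
  linarith [hsol.weighted_tsum_eq hk hp hq ht]

theorem continuousOn_weighted_tsum_uIcc (hsol : IsSol k p q r α D x M) (hk : ∀ i, 0 ≤ k i)
    (hp : ∀ i, 0 ≤ p i) (hq : ∀ i, 0 ≤ q i) {c : ℝ} (hc : uIcc 0 c ⊆ D) :
    ContinuousOn (fun t => ∑' i : ℕ, ((i : ℝ) + 1) * M i t) (uIcc 0 c) := by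
  have hQ := intervalIntegral.continuousOn_primitive_interval'
    (hsol.dominatedSeriesOn_iqM hk hp hq hc).intervalIntegrable_tsum left_mem_uIcc
  have hG := intervalIntegral.continuousOn_primitive_interval'
    (hsol.dominatedSeriesOn_pqM hk hp hq hc).intervalIntegrable_tsum left_mem_uIcc
  have hx := hsol.x_cont.mono hc
  refine ContinuousOn.congr (f := fun t => x 0 + ∑' i : ℕ, ((i : ℝ) + 1) * M i 0 + (r + α) * t
      + (∫ s in (0:ℝ)..t, ∑' i : ℕ, (i : ℝ) * q i * M i s)
      - (∫ s in (0:ℝ)..t, ∑' i : ℕ, ((i : ℝ) + 1) * ((p i + q i) * M i s)) - x t)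
    (by fun_prop) fun t ht => ?_
  linarith [hsol.add_weighted_tsum_eq hk hp hq ((uIcc_subset_uIcc left_mem_uIcc ht).trans hc)]

variable {T : ℝ}

theorem continuousOn_weighted_tsum (hsol : IsSol k p q r α (Ico 0 T) x M) (hk : ∀ i, 0 ≤ k i)
    (hp : ∀ i, 0 ≤ p i) (hq : ∀ i, 0 ≤ q i) :
    ContinuousOn (fun t => ∑' i : ℕ, ((i : ℝ) + 1) * M i t) (Ico 0 T) :=
  continuousOn_Ico_of_forall_continuousOn_Icc fun c hc => by
    rw [← uIcc_of_le hc.1]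
    exact hsol.continuousOn_weighted_tsum_uIcc hk hp hq
      (uIcc_of_le hc.1 ▸ Icc_subset_Ico_right hc.2)

theorem tendstoUniformlyOn_weighted_sum (hsol : IsSol k p q r α (Ico 0 T) x M)
    (hk : ∀ i, 0 ≤ k i) (hp : ∀ i, 0 ≤ p i) (hq : ∀ i, 0 ≤ q i) {T' : ℝ}
    (hK : Icc 0 T' ⊆ Ico 0 T) :
    TendstoUniformlyOn (fun N t => ∑ i ∈ Finset.range N, ((i : ℝ) + 1) * M i t)
      (fun t => ∑' i : ℕ, ((i : ℝ) + 1) * M i t) atTop (Icc 0 T') :=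
  Monotone.tendstoUniformlyOn_of_forall_tendsto isCompact_Icc
    (fun N => continuousOn_finsetSum _ fun i _ => continuousOn_const.mul ((hsol.M_cont i).mono hK))
    (fun t ht _ _ hmn => Finset.sum_le_sum_of_subset_of_nonneg (Finset.range_mono hmn)
      fun i _ _ => mul_nonneg (by positivity) (hsol.M_nonneg i t (hK ht)))
    ((hsol.continuousOn_weighted_tsum hk hp hq).mono hK)
    fun t ht => (hsol.summable_norm t (hK ht)).hasSum.tendsto_sum_nat

theorem tendstoUniformlyOn_sum_natCast_mul (hsol : IsSol k p q r α (Ico 0 T) x M)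
    (hk : ∀ i, 0 ≤ k i) (hp : ∀ i, 0 ≤ p i) (hq : ∀ i, 0 ≤ q i) {T' : ℝ}
    (hK : Icc 0 T' ⊆ Ico 0 T) :
    TendstoUniformlyOn (fun N t => ∑ i ∈ Finset.range N, (i : ℝ) * M i t)
      (fun t => ∑' i : ℕ, (i : ℝ) * M i t) atTop (Icc 0 T') := by
  refine tendstoUniformlyOn_tsum_of_abs_le (fun t ht => hsol.summable_norm t (hK ht))
    (hsol.tendstoUniformlyOn_weighted_sum hk hp hq hK) fun i t ht => ?_
  have hM := hsol.M_nonneg i t (hK ht)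
  rw [abs_of_nonneg (mul_nonneg i.cast_nonneg hM)]
  linarith

theorem tendsto_norm_sub (hsol : IsSol k p q r α (Ico 0 T) x M)
    (hk : ∀ i, 0 ≤ k i) (hp : ∀ i, 0 ≤ p i) (hq : ∀ i, 0 ≤ q i) {t₀ : ℝ} (ht₀ : t₀ ∈ Ico 0 T) :
    Tendsto (fun t => |x t - x t₀| + ∑' i : ℕ, ((i : ℝ) + 1) * |M i t - M i t₀|)
      (𝓝[Ico 0 T] t₀) (𝓝 0) := by
  have hweight (t : ℝ) (i : ℕ) :
      ((i : ℝ) + 1) * |M i t - M i t₀| = |((i : ℝ) + 1) * M i t - ((i : ℝ) + 1) * M i t₀| := by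
    rw [← mul_sub, abs_mul, abs_of_pos (a := (i : ℝ) + 1) (by positivity)]
  have hcont : ContinuousOn (fun t => |x t - x t₀| + ∑' i : ℕ, ((i : ℝ) + 1) * |M i t - M i t₀|)
      (Ico 0 T) := by
    refine (hsol.x_cont.sub continuousOn_const).abs.add
      (continuousOn_Ico_of_forall_continuousOn_Icc fun c hc => ?_)
    have hK : Icc 0 c ⊆ Ico 0 T := Icc_subset_Ico_right hc.2
    simp_rw [hweight]
    exact continuousOn_tsum_abs_sub (fun i => continuousOn_const.mul ((hsol.M_cont i).mono hK))
      (fun i t ht => mul_nonneg (by positivity) (hsol.M_nonneg i t (hK ht)))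
      (fun t ht => hsol.summable_norm t (hK ht)) (hsol.tendstoUniformlyOn_weighted_sum hk hp hq hK)
      (fun i => mul_nonneg (by positivity) (hsol.M_nonneg i t₀ ht₀)) (hsol.summable_norm t₀ ht₀)
  simpa using (hcont t₀ ht₀).tendsto

end IsSol

theorem silicosis_norm_continuity_and_uniform_convergence_general
    (k p q : ℕ → ℝ)
    (hk : ∀ i, 0 ≤ k i) (hp : ∀ i, 0 ≤ p i) (hq : ∀ i, 0 ≤ q i)
    (r α : ℝ)
    (T : ℝ) (x : ℝ → ℝ) (M : ℕ → ℝ → ℝ)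
    (hsol : IsSol k p q r α (Set.Ico 0 T) x M) :
    -- continuity of `t ↦ y(t)` in the norm of `X`
    (∀ t0 ∈ Set.Ico (0:ℝ) T,
      Filter.Tendsto (fun t => |x t - x t0| + ∑' i : ℕ, ((i : ℝ) + 1) * |M i t - M i t0|)
        (nhdsWithin t0 (Set.Ico 0 T)) (nhds 0)) ∧
    -- uniform convergence of `∑ i Mᵢ(t)` on compact subintervals of `[0,T)`
    (∀ T' : ℝ, Set.Icc (0:ℝ) T' ⊆ Set.Ico (0:ℝ) T →
      TendstoUniformlyOn (fun (N : ℕ) (t : ℝ) => ∑ i ∈ Finset.range N, (i : ℝ) * M i t)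
        (fun t => ∑' i : ℕ, (i : ℝ) * M i t) Filter.atTop (Set.Icc (0:ℝ) T')) :=
  ⟨fun _ ht₀ => hsol.tendsto_norm_sub hk hp hq ht₀,
    fun _ hK => hsol.tendstoUniformlyOn_sum_natCast_mul hk hp hq hK⟩

/-- every solution `y` on `[0,T)` is continuous as a map into the Banach
space `X` (with norm `‖y‖ = |x| + ∑(i+1)|Mᵢ|`), and the series `∑_{i≥1} i Mᵢ(t)`
converges uniformly on compact subintervals of `[0,T)`. -/
theorem silicosis_norm_continuity_and_uniform_convergence
    (k p q : ℕ → ℝ)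
    (hk : ∀ i, 0 ≤ k i) (hp : ∀ i, 0 ≤ p i) (hq : ∀ i, 0 ≤ q i)
    (r α : ℝ) (hr : 0 ≤ r) (hα : 0 ≤ α)
    (T : ℝ) (x : ℝ → ℝ) (M : ℕ → ℝ → ℝ)
    (hsol : IsSol k p q r α (Set.Ico 0 T) x M) :
    -- continuity of `t ↦ y(t)` in the norm of `X`
    (∀ t0 ∈ Set.Ico (0:ℝ) T,
      Filter.Tendsto (fun t => |x t - x t0| + ∑' i : ℕ, ((i : ℝ) + 1) * |M i t - M i t0|)
        (nhdsWithin t0 (Set.Ico 0 T)) (nhds 0)) ∧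
    -- uniform convergence of `∑ i Mᵢ(t)` on compact subintervals of `[0,T)`
    (∀ T' : ℝ, Set.Icc (0:ℝ) T' ⊆ Set.Ico (0:ℝ) T →
      TendstoUniformlyOn (fun (N : ℕ) (t : ℝ) => ∑ i ∈ Finset.range N, (i : ℝ) * M i t)
        (fun t => ∑' i : ℕ, (i : ℝ) * M i t) Filter.atTop (Set.Icc (0:ℝ) T')) :=
  silicosis_norm_continuity_and_uniform_convergence_general k p q hk hp hq r α T x M hsol
end
end
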